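/- arXiv:2302.06447 — 7 statements merged into one kernel-verified Lean document; each statement's English description precedes it below -/
import Mathlib

section
/- Let (x_k) be a stochastic process on a probability space with values in a finite-dimensional real Hilbert space H, and let F : H → ℝ satisfy Assumption 1. If Assumption 2 holds, then the set {ω ∈ Ω : F∞(ω) ∈ F(zer ∇F)} has probability one, i.e., almost surely the limit F∞ of (F(x_k)) is a value attained by F at some critical point of F. -/
open MeasureTheory Filter Topology Bornology

/-!
Coercivity confines the tail of a sequence along which `F` converges to a bounded sublevel set,
so in finite dimension the sequence has a cluster point `z`. Continuity of `F` and of `∇F`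
transfers the limits `F∞` and `0` to `F z` and `∇F z`.
-/

theorem ContDiff.continuous_gradient {H : Type*} [NormedAddCommGroup H] [InnerProductSpace ℝ H]
    [CompleteSpace H] {F : H → ℝ} (hF : ContDiff ℝ 1 F) : Continuous (gradient F) :=
  (InnerProductSpace.toDual ℝ H).symm.continuous.comp (hF.continuous_fderiv one_ne_zero)

theorem MapClusterPt.eq_of_tendsto_comp {ι X Y : Type*} [TopologicalSpace X] [TopologicalSpace Y]
    [T2Space Y] {l : Filter ι} {u : ι → X} {z : X} {g : X → Y} {b : Y}
    (hz : MapClusterPt z l u) (hg : ContinuousAt g z) (hgu : Tendsto (g ∘ u) l (𝓝 b)) :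
    g z = b :=
  eq_of_nhds_neBot <| (hz.continuousAt_comp hg).neBot.mono (inf_le_inf_left _ hgu)

theorem isBounded_setOf_lt_of_tendsto_cobounded {X : Type*} [Bornology X] {F : X → ℝ}
    (hF : Tendsto F (cobounded X) atTop) (c : ℝ) : IsBounded {y | F y < c} :=
  (isBounded_compl_iff.2 (hF.eventually_ge_atTop c)).subset fun _ hy =>
    not_le.2 (Set.mem_ofPred.1 hy)

theorem exists_mapClusterPt_of_tendsto_cobounded {ι X : Type*} [PseudoMetricSpace X]
    [ProperSpace X] {F : X → ℝ} (hF : Tendsto F (cobounded X) atTop) {l : Filter ι} [NeBot l]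
    {u : ι → X} {a : ℝ} (hFu : Tendsto (F ∘ u) l (𝓝 a)) : ∃ z, MapClusterPt z l u := by
  have hK := (isBounded_setOf_lt_of_tendsto_cobounded hF (a + 1)).isCompact_closure
  have hu : ∀ᶠ k in l, u k ∈ closure {y | F y < a + 1} :=
    (hFu.eventually (eventually_lt_nhds (lt_add_one a))).mono fun _ hk => subset_closure hk
  obtain ⟨z, -, hz⟩ := hK.exists_mapClusterPt_of_frequently hu.frequently
  exact ⟨z, hz⟩

theorem mem_image_setOf_gradient_eq_zero_of_tendsto {ι H : Type*} [NormedAddCommGroup H]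
    [InnerProductSpace ℝ H] [FiniteDimensional ℝ H] {F : H → ℝ}
    (hF_coercive : Tendsto F (cobounded H) atTop) (hF_smooth : ContDiff ℝ 1 F)
    {l : Filter ι} [NeBot l] {u : ι → H} {a : ℝ}
    (hFu : Tendsto (F ∘ u) l (𝓝 a)) (hgu : Tendsto (gradient F ∘ u) l (𝓝 0)) :
    a ∈ F '' {y | gradient F y = 0} := by
  obtain ⟨z, hz⟩ := exists_mapClusterPt_of_tendsto_cobounded hF_coercive hFu
  exact ⟨z, hz.eq_of_tendsto_comp hF_smooth.continuous_gradient.continuousAt hgu,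
    hz.eq_of_tendsto_comp hF_smooth.continuous.continuousAt hFu⟩

theorem as_limit_in_image_of_critical_points_general
    {H : Type*} [NormedAddCommGroup H] [InnerProductSpace ℝ H] [FiniteDimensional ℝ H]
    {Ω : Type*} [MeasureSpace Ω]
    (F : H → ℝ)
    (hF_coercive : Tendsto F (Bornology.cobounded H) atTop)
    (hF_smooth : ContDiff ℝ 1 F)
    (x : ℕ → Ω → H) (Finf : Ω → ℝ)
    (hFconv : ∀ᵐ ω, Tendsto (fun k => F (x k ω)) atTop (𝓝 (Finf ω)))
    (hgrad : ∀ᵐ ω, Tendsto (fun k => gradient F (x k ω)) atTop (𝓝 (0 : H))) :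
    ∀ᵐ ω, Finf ω ∈ F '' {y : H | gradient F y = 0} := by
  filter_upwards [hFconv, hgrad] with ω hF hg
  exact mem_image_setOf_gradient_eq_zero_of_tendsto hF_coercive hF_smooth hF hg

/-- Under Assumptions 1 and 2, almost surely the limit `Finf` of `(F (x k))`
is a value attained by `F` at some critical point of `F`. -/
theorem as_limit_in_image_of_critical_points
    {H : Type*} [NormedAddCommGroup H] [InnerProductSpace ℝ H] [FiniteDimensional ℝ H]
    {Ω : Type*} [MeasureSpace Ω] [IsProbabilityMeasure (volume : Measure Ω)]
    (F : H → ℝ)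
    (hF_coercive : Tendsto F (Bornology.cobounded H) atTop)
    (hF_smooth : ContDiff ℝ 1 F)
    (x : ℕ → Ω → H) (Finf : Ω → ℝ)
    (hFconv : ∀ᵐ ω, Tendsto (fun k => F (x k ω)) atTop (𝓝 (Finf ω)))
    (hgrad : ∀ᵐ ω, Tendsto (fun k => gradient F (x k ω)) atTop (𝓝 (0 : H))) :
    ∀ᵐ ω, Finf ω ∈ F '' {y : H | gradient F y = 0} :=
  as_limit_in_image_of_critical_points_general F hF_coercive hF_smooth x Finf hFconv hgrad
end

section
/- Let (x_k) be a stochastic process on a probability space with values in a finite-dimensional real Hilbert space H, and let F : H → ℝ satisfy Assumption 1 and Assumption 2. Suppose in addition that (‖x_{k+1} − x_k‖) converges almost surely to 0 and that the set zer ∇F is at most countable (countable or finite). Then the sequence (x_k) almost surely converges to a point of zer ∇F. -/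
open MeasureTheory Filter Topology

/-!
Fix a good `ω`. Coercivity and the convergence of `F (x k)` keep `x k` in a compact set, and the
continuity of `∇F` makes every cluster point critical. If there were two cluster points `a ≠ b`,
then, since only countably many distances `dist c a` with `c` critical occur, some radius
`r < dist b a` is attained by none of them. The real sequence `dist (x k) a` is frequently below
and frequently above `r` while its steps tend to `0`, so it cannot jump over any band around `r`;
hence `r` is one of its cluster points, and by compactness `r = dist c a` for a cluster point `c`
of `x`, which is critical: a contradiction. A sequence in a compact set with a unique cluster point
converges to it.
-/

open Bornology Set

theorem MapClusterPt.eq_of_tendsto {ι Y : Type*} [TopologicalSpace Y] [T2Space Y] {l : Filter ι}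
    {v : ι → Y} {y z : Y} (hy : MapClusterPt y l v) (hv : Tendsto v l (𝓝 z)) : y = z :=
  eq_of_nhds_neBot (ClusterPt.mono hy hv)

theorem IsCompact.exists_mapClusterPt_of_mapClusterPt_comp {ι X Y : Type*} [TopologicalSpace X]
    [TopologicalSpace Y] [T2Space Y] {K : Set X} (hK : IsCompact K) {l : Filter ι} {u : ι → X}
    (hu : ∀ᶠ i in l, u i ∈ K) {g : X → Y} (hg : Continuous g) {y : Y}
    (hy : MapClusterPt y l (g ∘ u)) : ∃ x ∈ K, MapClusterPt x l u ∧ g x = y := by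
  have : NeBot (l ⊓ comap (g ∘ u) (𝓝 y)) := by
    rw [← map_neBot_iff (g ∘ u), Filter.push_pull, inf_comm]
    exact hy
  obtain ⟨x, hxK, hx⟩ := hK.exists_mapClusterPt_of_frequently
    (l := l ⊓ comap (g ∘ u) (𝓝 y)) (hu.filter_mono inf_le_left).frequently
  refine ⟨x, hxK, hx.mono inf_le_left, ?_⟩
  exact (hx.continuousAt_comp hg.continuousAt).eq_of_tendsto
    (tendsto_comap.mono_left inf_le_right)

theorem mapClusterPt_of_frequently_lt_of_frequently_gt {f : ℕ → ℝ} {r : ℝ}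
    (hstep : Tendsto (fun k => dist (f (k + 1)) (f k)) atTop (𝓝 0))
    (hlt : ∃ᶠ k in atTop, f k < r) (hgt : ∃ᶠ k in atTop, r < f k) :
    MapClusterPt r atTop f := by
  rw [Metric.nhds_basis_ball.mapClusterPt_iff_frequently]
  intro ε hε
  by_contra hfar
  rw [not_frequently] at hfar
  obtain ⟨N, hN⟩ := eventually_atTop.1 (hfar.and (hstep.eventually (gt_mem_nhds hε)))
  have hstay : ∀ k ≥ N, f k < r → f (k + 1) < r := by
    intro k hk hfk
    have hfar' := (hN (k + 1) (by omega)).1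
    have hclose := (hN k hk).2
    simp only [Metric.mem_ball, Real.dist_eq] at hfar' hclose
    rw [abs_lt] at hclose
    contrapose! hfar'
    rw [abs_lt]
    constructor <;> linarith
  obtain ⟨k₀, hk₀N, hk₀⟩ := (frequently_atTop.1 hlt) N
  have hbelow : ∀ k ≥ k₀, f k < r := fun k hk =>
    Nat.le_induction hk₀ (fun k hk ih => hstay k (hk₀N.trans hk) ih) k hk
  obtain ⟨k, hk₁, hk₂⟩ := (hgt.and_eventually (eventually_atTop.2 ⟨k₀, hbelow⟩)).exists
  exact hk₁.not_gt hk₂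

theorem isBounded_range_of_tendsto_cobounded {ι X β : Type*} [Bornology X] [Preorder β]
    [NoMaxOrder β] {F : X → β} (hF : Tendsto F (cobounded X) atTop) {u : ι → X}
    (hu : BddAbove (range (F ∘ u))) : IsBounded (range u) := by
  obtain ⟨M, hM⟩ := hu
  refine (isBounded_compl_iff.2 <| isCobounded_def.2 <| hF.eventually_gt_atTop M).subset ?_
  rintro _ ⟨i, rfl⟩ hi
  exact (lt_of_lt_of_le hi (hM ⟨i, rfl⟩)).false

section CountableClusterPoints

variable {X : Type*} [MetricSpace X] {K C : Set X} {u : ℕ → X}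

theorem eq_of_mapClusterPt_of_countable (hK : IsCompact K) (hu : ∀ᶠ k in atTop, u k ∈ K)
    (hstep : Tendsto (fun k => dist (u (k + 1)) (u k)) atTop (𝓝 0)) (hC : C.Countable)
    (hclus : ∀ c, MapClusterPt c atTop u → c ∈ C) {a b : X} (ha : MapClusterPt a atTop u)
    (hb : MapClusterPt b atTop u) : a = b := by
  by_contra hab
  obtain ⟨r, hrC, hr₀, hrb⟩ : ∃ r ∈ ((dist · a) '' C)ᶜ, 0 < r ∧ r < dist b a :=
    ((hC.image _).dense_compl ℝ).exists_between (dist_pos.2 (Ne.symm hab))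
  have hdist_step : Tendsto (fun k => dist (dist (u (k + 1)) a) (dist (u k) a)) atTop (𝓝 0) :=
    squeeze_zero (fun _ => dist_nonneg) (fun k => abs_dist_sub_le _ _ _) hstep
  have hlt : ∃ᶠ k in atTop, dist (u k) a < r := ha.frequently (Metric.ball_mem_nhds a hr₀)
  have hgt : ∃ᶠ k in atTop, r < dist (u k) a :=
    hb.frequently ((continuous_id.dist continuous_const).tendsto b |>.eventually (lt_mem_nhds hrb))
  obtain ⟨c, -, hc, hca⟩ := hK.exists_mapClusterPt_of_mapClusterPt_comp hu
    (continuous_id.dist continuous_const)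
    (mapClusterPt_of_frequently_lt_of_frequently_gt hdist_step hlt hgt)
  exact hrC ⟨c, hclus c hc, hca⟩

theorem exists_tendsto_of_countable_mapClusterPt (hK : IsCompact K)
    (hu : ∀ᶠ k in atTop, u k ∈ K)
    (hstep : Tendsto (fun k => dist (u (k + 1)) (u k)) atTop (𝓝 0)) (hC : C.Countable)
    (hclus : ∀ c, MapClusterPt c atTop u → c ∈ C) : ∃ c ∈ C, Tendsto u atTop (𝓝 c) := by
  obtain ⟨a, -, ha⟩ := hK.exists_mapClusterPt_of_frequently hu.frequently
  exact ⟨a, hclus a ha, hK.tendsto_nhds_of_unique_mapClusterPt hu fun b _ hb =>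
    eq_of_mapClusterPt_of_countable hK hu hstep hC hclus hb ha⟩

end CountableClusterPoints

theorem as_convergence_of_countable_critical_set_general
    {H : Type*} [NormedAddCommGroup H] [InnerProductSpace ℝ H] [FiniteDimensional ℝ H]
    {Ω : Type*} [MeasureSpace Ω]
    (F : H → ℝ)
    (hF_coercive : Tendsto F (Bornology.cobounded H) atTop)
    (hF_smooth : ContDiff ℝ 1 F)
    (x : ℕ → Ω → H) (Finf : Ω → ℝ)
    (hFconv : ∀ᵐ ω, Tendsto (fun k => F (x k ω)) atTop (𝓝 (Finf ω)))
    (hgrad : ∀ᵐ ω, Tendsto (fun k => gradient F (x k ω)) atTop (𝓝 (0 : H)))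
    (hstep : ∀ᵐ ω, Tendsto (fun k => ‖x (k+1) ω - x k ω‖) atTop (𝓝 0))
    (hcount : ({y : H | gradient F y = 0}).Countable) :
    ∀ᵐ ω, ∃ xstar : H, gradient F xstar = 0 ∧
      Tendsto (fun k => x k ω) atTop (𝓝 xstar) := by
  have hgrad_cont : Continuous (gradient F) :=
    (InnerProductSpace.toDual ℝ H).symm.continuous.comp
      (hF_smooth.continuous_fderiv one_ne_zero)
  filter_upwards [hFconv, hgrad, hstep] with ω hFω hgradω hstepω
  have hbdd : IsBounded (range fun k => x k ω) :=
    isBounded_range_of_tendsto_cobounded hF_coercive hFω.bddAbove_range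
  have hstep_dist : Tendsto (fun k => dist (x (k + 1) ω) (x k ω)) atTop (𝓝 0) := by
    simpa only [dist_eq_norm] using hstepω
  exact exists_tendsto_of_countable_mapClusterPt hbdd.isCompact_closure
    (Eventually.of_forall fun k => subset_closure (mem_range_self k)) hstep_dist hcount
    fun c hc => (hc.continuousAt_comp hgrad_cont.continuousAt).eq_of_tendsto hgradω

/-- Under Assumptions 1 and 2, if moreover `‖x (k+1) - x k‖ → 0` almost
surely and the set of critical points of `F` is at most countable, then `(x k)` converges
almost surely to a critical point of `F`. -/
theorem as_convergence_of_countable_critical_set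
    {H : Type*} [NormedAddCommGroup H] [InnerProductSpace ℝ H] [FiniteDimensional ℝ H]
    {Ω : Type*} [MeasureSpace Ω] [IsProbabilityMeasure (volume : Measure Ω)]
    (F : H → ℝ)
    (hF_coercive : Tendsto F (Bornology.cobounded H) atTop)
    (hF_smooth : ContDiff ℝ 1 F)
    (x : ℕ → Ω → H) (Finf : Ω → ℝ)
    (hFconv : ∀ᵐ ω, Tendsto (fun k => F (x k ω)) atTop (𝓝 (Finf ω)))
    (hgrad : ∀ᵐ ω, Tendsto (fun k => gradient F (x k ω)) atTop (𝓝 (0 : H)))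
    (hstep : ∀ᵐ ω, Tendsto (fun k => ‖x (k+1) ω - x k ω‖) atTop (𝓝 0))
    (hcount : ({y : H | gradient F y = 0}).Countable) :
    ∀ᵐ ω, ∃ xstar : H, gradient F xstar = 0 ∧
      Tendsto (fun k => x k ω) atTop (𝓝 xstar) :=
  as_convergence_of_countable_critical_set_general F hF_coercive hF_smooth x Finf hFconv hgrad hstep
    hcount
end

section
/- Let H be a finite-dimensional real Hilbert space, let C = ⋃_{i=1}^I C_i be a union of I ≥ 1 non-empty pairwise disjoint compact subsets C_1, …, C_I of H, and let f : H → ℝ be a differentiable function satisfying the Kurdyka–Łojasiewicz property on C. Suppose f is constant on each C_i with value f_{C_i}. Then there exist ε > 0, ζ > 0 and φ ∈ Φ_ζ such that for every i ∈ {1, …, I} and every x ∈ H with dist(x, C) < ε and 0 < f(x) − f_{C_i} < ζ, one has ‖∇f(x)‖ · φ'(f(x) − f_{C_i}) ≥ 1. -/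
open Filter Topology

/-- `φ ∈ Φ_ζ` for a finite `ζ > 0`: `φ` is concave and non-negative on `[0, ζ)`,
`φ 0 = 0`, `φ` is continuous at `0` (within the domain), continuously differentiable
on `(0, ζ)`, and `φ' > 0` on `(0, ζ)`. -/
def IsPhi (ζ : ℝ) (φ : ℝ → ℝ) : Prop :=
  ConcaveOn ℝ (Set.Ico 0 ζ) φ ∧
  (∀ s ∈ Set.Ico (0:ℝ) ζ, 0 ≤ φ s) ∧
  φ 0 = 0 ∧
  ContinuousWithinAt φ (Set.Ico 0 ζ) 0 ∧
  (∀ s ∈ Set.Ioo (0:ℝ) ζ, HasDerivAt φ (deriv φ s) s) ∧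
  ContinuousOn (deriv φ) (Set.Ioo 0 ζ) ∧
  (∀ s ∈ Set.Ioo (0:ℝ) ζ, 0 < deriv φ s)

/-- The Kurdyka–Łojasiewicz property of a differentiable function `f` on a set `E`. -/
def HasKLOn {H : Type*} [NormedAddCommGroup H] [InnerProductSpace ℝ H]
    [FiniteDimensional ℝ H] (f : H → ℝ) (E : Set H) : Prop :=
  ∀ x₀ ∈ E, ∃ V ∈ 𝓝 x₀, ∃ ζ > (0:ℝ), ∃ φ : ℝ → ℝ, IsPhi ζ φ ∧
    ∀ x ∈ V, 0 < f x - f x₀ → f x - f x₀ < ζ →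
      1 ≤ ‖gradient f x‖ * deriv φ (f x - f x₀)

/-!
On a single compact set `K` on which `f` is constant, the KL property is uniformized by covering
`K` with finitely many KL neighbourhoods: a thickening of `K` lies in their union, and the sum of
their desingularizing functions is again in `Φ_ζ` for the smallest `ζ`, with a derivative that
dominates each summand's. The pieces `C i` are combined by the same summation. Let `Δ` separate
the distinct values of `fC`. By continuity `f` stays within `Δ / 2` of `fC j` near `C j`, so
with `ζ ≤ Δ / 2` a point near `C j` with `0 < f x - fC i < ζ` has `fC i = fC j`, and the uniform
inequality for `C j` applies.
-/

open Set Metric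

theorem exists_pos_forall_dist_lt_imp_eq {ι α : Type*} [Finite ι] [Nonempty ι] [MetricSpace α]
    (a : ι → α) : ∃ Δ > 0, ∀ i j, dist (a i) (a j) < Δ → a i = a j := by
  classical
  let r : ι × ι → ℝ := fun p => if a p.1 = a p.2 then 1 else dist (a p.1) (a p.2)
  obtain ⟨p₀, hp₀⟩ := Finite.exists_min r
  refine ⟨r p₀, ?_, fun i j hij => by_contra fun hne => ?_⟩
  · dsimp only [r]
    split_ifs with h
    exacts [one_pos, dist_pos.2 h]
  · have := hp₀ (i, j)
    simp only [r, if_neg hne] at this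
    linarith

theorem IsCompact.exists_thickening_dist_lt {X Y : Type*} [PseudoMetricSpace X]
    [PseudoMetricSpace Y] {K : Set X} (hK : IsCompact K) {f : X → Y} (hf : Continuous f)
    {c : Y} (hc : ∀ x ∈ K, f x = c) {δ : ℝ} (hδ : 0 < δ) :
    ∃ ε > 0, ∀ x ∈ thickening ε K, dist (f x) c < δ :=
  hK.exists_thickening_subset_open (isOpen_ball.preimage hf) fun x hx =>
    show f x ∈ ball c δ by rw [hc x hx]; exact mem_ball_self hδ

theorem ConcaveOn.finset_sum {𝕜 E β ι : Type*} [Semiring 𝕜] [PartialOrder 𝕜] [AddCommMonoid E]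
    [AddCommMonoid β] [PartialOrder β] [IsOrderedAddMonoid β] [SMul 𝕜 E] [Module 𝕜 β]
    {s : Set E} (hs : Convex 𝕜 s) {t : Finset ι} {f : ι → E → β}
    (h : ∀ k ∈ t, ConcaveOn 𝕜 s (f k)) : ConcaveOn 𝕜 s (∑ k ∈ t, f k) :=
  Finset.sum_induction _ (ConcaveOn 𝕜 s) (fun _ _ => ConcaveOn.add) (concaveOn_const 0 hs) h

namespace IsPhi

variable {ζ ζ' s : ℝ}

theorem mono {φ : ℝ → ℝ} (h : IsPhi ζ φ) (hζ : ζ' ≤ ζ) : IsPhi ζ' φ := by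
  obtain ⟨hconc, hnonneg, hzero, hcont, hderiv, hderiv_cont, hderiv_pos⟩ := h
  have hIco : Ico 0 ζ' ⊆ Ico 0 ζ := Ico_subset_Ico_right hζ
  have hIoo : Ioo 0 ζ' ⊆ Ioo 0 ζ := Ioo_subset_Ioo_right hζ
  exact ⟨hconc.subset hIco (convex_Ico _ _), fun s hs => hnonneg s (hIco hs), hzero,
    hcont.mono hIco, fun s hs => hderiv s (hIoo hs), hderiv_cont.mono hIoo,
    fun s hs => hderiv_pos s (hIoo hs)⟩

theorem hasDerivAt {φ : ℝ → ℝ} (h : IsPhi ζ φ) (hs : s ∈ Ioo 0 ζ) :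
    HasDerivAt φ (deriv φ s) s :=
  h.2.2.2.2.1 s hs

theorem deriv_pos {φ : ℝ → ℝ} (h : IsPhi ζ φ) (hs : s ∈ Ioo 0 ζ) : 0 < deriv φ s :=
  h.2.2.2.2.2.2 s hs

variable {ι : Type*} {t : Finset ι} {φ : ι → ℝ → ℝ}

theorem deriv_finset_sum (h : ∀ k ∈ t, IsPhi ζ (φ k)) (hs : s ∈ Ioo 0 ζ) :
    deriv (fun x => ∑ k ∈ t, φ k x) s = ∑ k ∈ t, deriv (φ k) s :=
  (HasDerivAt.fun_sum fun k hk => (h k hk).hasDerivAt hs).deriv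

theorem finset_sum (ht : t.Nonempty) (h : ∀ k ∈ t, IsPhi ζ (φ k)) :
    IsPhi ζ (fun x => ∑ k ∈ t, φ k x) := by
  choose hconc hnonneg hzero hcont hderiv hderiv_cont hderiv_pos using id h
  refine ⟨?_, fun s hs => Finset.sum_nonneg fun k hk => hnonneg k hk s hs,
    Finset.sum_eq_zero hzero, tendsto_finsetSum _ hcont, fun s hs => ?_, ?_, fun s hs => ?_⟩
  · rw [← Finset.sum_fn]
    exact ConcaveOn.finset_sum (convex_Ico _ _) hconc
  · rw [deriv_finset_sum h hs]
    exact HasDerivAt.fun_sum fun k hk => hderiv k hk s hs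
  · exact (continuousOn_finsetSum t hderiv_cont).congr fun s hs => deriv_finset_sum h hs
  · rw [deriv_finset_sum h hs]
    exact Finset.sum_pos (fun k hk => hderiv_pos k hk s hs) ht

theorem deriv_le_deriv_finset_sum (h : ∀ k ∈ t, IsPhi ζ (φ k)) {k : ι} (hk : k ∈ t)
    (hs : s ∈ Ioo 0 ζ) : deriv (φ k) s ≤ deriv (fun x => ∑ k ∈ t, φ k x) s := by
  rw [deriv_finset_sum h hs]
  exact Finset.single_le_sum (fun j hj => ((h j hj).deriv_pos hs).le) hk

end IsPhi

section KL

variable {H : Type*} [NormedAddCommGroup H] [InnerProductSpace ℝ H] [CompleteSpace H]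
  {f : H → ℝ}

def KLInequalityOn (f : H → ℝ) (c ζ : ℝ) (φ : ℝ → ℝ) (V : Set H) : Prop :=
  ∀ x ∈ V, 0 < f x - c → f x - c < ζ → 1 ≤ ‖gradient f x‖ * deriv φ (f x - c)

theorem KLInequalityOn.mono {c ζ ζ' : ℝ} {φ : ℝ → ℝ} {V V' : Set H}
    (h : KLInequalityOn f c ζ φ V) (hζ : ζ' ≤ ζ) (hV : V' ⊆ V) :
    KLInequalityOn f c ζ' φ V' :=
  fun x hx hpos hlt => h x (hV hx) hpos (hlt.trans_le hζ)

theorem KLInequalityOn.of_deriv_le {c ζ : ℝ} {φ ψ : ℝ → ℝ} {V : Set H}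
    (h : KLInequalityOn f c ζ φ V) (hle : ∀ s ∈ Ioo 0 ζ, deriv φ s ≤ deriv ψ s) :
    KLInequalityOn f c ζ ψ V :=
  fun x hx hpos hlt =>
    (h x hx hpos hlt).trans (mul_le_mul_of_nonneg_left (hle _ ⟨hpos, hlt⟩) (norm_nonneg _))

theorem isPhi_sum_and_klInequalityOn {ι : Type*} [Fintype ι] [Nonempty ι] {c ζ : ι → ℝ}
    {φ : ι → ℝ → ℝ} {V : ι → Set H} (hφ : ∀ k, IsPhi (ζ k) (φ k))
    (hV : ∀ k, KLInequalityOn f (c k) (ζ k) (φ k) (V k)) {ζ₀ : ℝ} (hζ₀ : ∀ k, ζ₀ ≤ ζ k) :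
    IsPhi ζ₀ (fun s => ∑ k, φ k s) ∧
      ∀ k, KLInequalityOn f (c k) ζ₀ (fun s => ∑ k, φ k s) (V k) := by
  have hφ₀ : ∀ k ∈ Finset.univ, IsPhi ζ₀ (φ k) := fun k _ => (hφ k).mono (hζ₀ k)
  exact ⟨IsPhi.finset_sum Finset.univ_nonempty hφ₀, fun k =>
    ((hV k).mono (hζ₀ k) subset_rfl).of_deriv_le fun s hs =>
      IsPhi.deriv_le_deriv_finset_sum hφ₀ (Finset.mem_univ k) hs⟩

end KL

section HasKLOn

variable {H : Type*} [NormedAddCommGroup H] [InnerProductSpace ℝ H] [FiniteDimensional ℝ H]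
  {f : H → ℝ}

theorem HasKLOn.mono {E F : Set H} (h : HasKLOn f E) (hFE : F ⊆ E) : HasKLOn f F :=
  fun x hx => h x (hFE hx)

theorem HasKLOn.exists_uniform {K : Set H} (hKL : HasKLOn f K) (hK : IsCompact K)
    (hne : K.Nonempty) {c : ℝ} (hc : ∀ x ∈ K, f x = c) :
    ∃ ε > 0, ∃ ζ > 0, ∃ φ : ℝ → ℝ, IsPhi ζ φ ∧ KLInequalityOn f c ζ φ (thickening ε K) := by
  choose! V hV ζ hζ φ hφ hKLV using hKL
  obtain ⟨t, htK, hcover⟩ :=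
    hK.elim_nhds_subcover (fun x => interior (V x)) fun x hx => interior_mem_nhds.2 (hV x hx)
  obtain ⟨ε, hε, hthick⟩ :=
    hK.exists_thickening_subset_open (isOpen_biUnion fun _ _ => isOpen_interior) hcover
  have : Nonempty t := by
    obtain ⟨k, hk, -⟩ := mem_iUnion₂.1 (hcover hne.some_mem)
    exact ⟨⟨k, hk⟩⟩
  obtain ⟨k₀, hk₀⟩ := Finite.exists_min fun k : t => ζ k
  obtain ⟨hφ₀, hKL₀⟩ := isPhi_sum_and_klInequalityOn (c := fun _ => c) (V := fun k : t => V k)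
    (fun k => hφ k (htK k k.2)) (fun k => hc k (htK k k.2) ▸ hKLV k (htK k k.2)) hk₀
  refine ⟨ε, hε, ζ k₀, hζ k₀ (htK k₀ k₀.2), _, hφ₀, fun x hx => ?_⟩
  obtain ⟨k, hk, hxk⟩ := mem_iUnion₂.1 (hthick hx)
  exact hKL₀ ⟨k, hk⟩ x (interior_subset hxk)

end HasKLOn

theorem extended_uniformized_KL_general
    {H : Type*} [NormedAddCommGroup H] [InnerProductSpace ℝ H] [FiniteDimensional ℝ H]
    (I : ℕ) (hI : 1 ≤ I) (C : Fin I → Set H)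
    (hC_ne : ∀ i, (C i).Nonempty)
    (hC_compact : ∀ i, IsCompact (C i))
    (f : H → ℝ) (hf : Differentiable ℝ f)
    (hKL : HasKLOn f (⋃ i, C i))
    (fC : Fin I → ℝ) (hconst : ∀ i, ∀ x ∈ C i, f x = fC i) :
    ∃ ε > (0:ℝ), ∃ ζ > (0:ℝ), ∃ φ : ℝ → ℝ, IsPhi ζ φ ∧
      ∀ (i : Fin I) (x : H), Metric.infDist x (⋃ j, C j) < ε →
        0 < f x - fC i → f x - fC i < ζ →
        1 ≤ ‖gradient f x‖ * deriv φ (f x - fC i) := by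
  have : Nonempty (Fin I) := ⟨⟨0, hI⟩⟩
  obtain ⟨Δ, hΔ, hgap⟩ := exists_pos_forall_dist_lt_imp_eq fC
  choose ε₁ hε₁ ζ₁ hζ₁ φ₁ hφ₁ hKL₁ using fun i =>
    (hKL.mono (subset_iUnion C i)).exists_uniform (hC_compact i) (hC_ne i) (hconst i)
  choose ε₂ hε₂ hclose using fun i =>
    (hC_compact i).exists_thickening_dist_lt hf.continuous (hconst i) (half_pos hΔ)
  obtain ⟨i₀, hi₀⟩ := Finite.exists_min fun i => min (ε₁ i) (ε₂ i)
  obtain ⟨j₀, hj₀⟩ := Finite.exists_min ζ₁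
  obtain ⟨hφ, hKLφ⟩ := isPhi_sum_and_klInequalityOn hφ₁ hKL₁
    fun j => (min_le_right (Δ / 2) _).trans (hj₀ j)
  refine ⟨_, lt_min (hε₁ i₀) (hε₂ i₀), _, lt_min (half_pos hΔ) (hζ₁ j₀), _, hφ,
    fun i x hx hpos hlt => ?_⟩
  obtain ⟨j, hj⟩ : ∃ j, x ∈ thickening (min (ε₁ i₀) (ε₂ i₀)) (C j) := by
    rwa [← mem_iUnion, ← thickening_iUnion,
      mem_thickening_iff_infDist_lt ((hC_ne i₀).mono (subset_iUnion C i₀))]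
  have hij : fC i = fC j := hgap i j <| calc
    dist (fC i) (fC j) ≤ dist (f x) (fC i) + dist (f x) (fC j) := dist_triangle_left _ _ _
    _ < Δ / 2 + Δ / 2 := by
      refine add_lt_add ?_ (hclose j x (thickening_mono ((hi₀ j).trans (min_le_right _ _)) _ hj))
      rw [Real.dist_eq, abs_of_pos hpos]
      exact hlt.trans_le (min_le_left _ _)
    _ = Δ := add_halves Δ
  rw [hij] at hpos hlt ⊢
  exact hKLφ j x (thickening_mono ((hi₀ j).trans (min_le_left _ _)) _ hj) hpos hlt

/-- **extended uniformized KL property.** If `C = ⋃ i, C i` is a finite union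
of non-empty pairwise disjoint compact sets, `f` is differentiable, satisfies the KL property
on `C`, and is constant on each `C i` with value `fC i`, then there are uniform `ε > 0`,
`ζ > 0` and `φ ∈ Φ_ζ` such that the KL inequality holds near `C` relative to each value
`fC i`. -/
theorem extended_uniformized_KL
    {H : Type*} [NormedAddCommGroup H] [InnerProductSpace ℝ H] [FiniteDimensional ℝ H]
    (I : ℕ) (hI : 1 ≤ I) (C : Fin I → Set H)
    (hC_ne : ∀ i, (C i).Nonempty)
    (hC_compact : ∀ i, IsCompact (C i))
    (hC_disj : Pairwise (Function.onFun Disjoint C))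
    (f : H → ℝ) (hf : Differentiable ℝ f)
    (hKL : HasKLOn f (⋃ i, C i))
    (fC : Fin I → ℝ) (hconst : ∀ i, ∀ x ∈ C i, f x = fC i) :
    ∃ ε > (0:ℝ), ∃ ζ > (0:ℝ), ∃ φ : ℝ → ℝ, IsPhi ζ φ ∧
      ∀ (i : Fin I) (x : H), Metric.infDist x (⋃ j, C j) < ε →
        0 < f x - fC i → f x - fC i < ζ →
        1 ≤ ‖gradient f x‖ * deriv φ (f x - fC i) :=
  extended_uniformized_KL_general I hI C hC_ne hC_compact f hf hKL fC hconst
end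

section
/- Let (x_k) be a stochastic process with values in a finite-dimensional real Hilbert space H and let F : H → ℝ satisfy Assumption 1. If Assumption 4 holds, then Assumption 2 holds: (F(x_k)) converges almost surely to an almost surely finite random variable F∞, and (∇F(x_k)) converges almost surely to 0; moreover ∑_k v_k ‖∇F(x_k)‖² < +∞ almost surely. -/
/-! Robbins–Siegmund. Dividing by `∏_{j<k} (1 + u_j)` reduces the descent inequality to
`E[Y_{k+1} | 𝓕_k] ≤ Y_k - Z_k + w_k`, which makes `Y_k + ∑_{j<k} (Z_j - w_j)` a supermartingale
bounded below by `-∑_{j<k} w_j`. Stopped before the partial sums of `w` reach a level `a`, it is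
bounded below by `-a`, hence L¹-bounded and a.s. convergent; on the event `∑ w < a` it is never
stopped. Letting `a → ∞` gives a.s. convergence of `Y_k = F(x_k) - F*` and of
`∑ Z_k = ∑ v_k ‖∇F(x_k)‖²`, and since `v_k ≥ ε > 0` the latter forces `∇F(x_k) → 0`. -/

open MeasureTheory Filter Topology Finset

namespace MeasureTheory

variable {Ω : Type*} {m0 : MeasurableSpace Ω} {μ : Measure Ω} [IsFiniteMeasure μ]
  {𝓕 : Filtration ℕ m0}

theorem StronglyAdapted.stronglyMeasurable_sum_range {D : ℕ → Ω → ℝ}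
    (hD : StronglyAdapted 𝓕 D) {k n : ℕ} (hkn : k ≤ n + 1) :
    StronglyMeasurable[𝓕 n] fun ω => ∑ j ∈ range k, D j ω :=
  Finset.stronglyMeasurable_fun_sum _ fun j hj =>
    (hD j).mono (𝓕.mono (by rw [mem_range] at hj; omega))

theorem Submartingale.exists_ae_tendsto_of_le {f : ℕ → Ω → ℝ} {a : ℝ}
    (hf : Submartingale f 𝓕 μ) (hfa : ∀ n ω, f n ω ≤ a) :
    ∀ᵐ ω ∂μ, ∃ c, Tendsto (fun n => f n ω) atTop (𝓝 c) := by
  refine hf.exists_ae_tendsto_of_bdd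
    (R := (2 * |a| * μ.real Set.univ - ∫ ω, f 0 ω ∂μ).toNNReal) fun n => ?_
  rw [eLpNorm_one_eq_lintegral_enorm,
    ← ofReal_integral_norm_eq_lintegral_enorm (hf.integrable n)]
  refine ENNReal.ofReal_le_ofReal ?_
  have hnorm : ∀ ω, ‖f n ω‖ ≤ 2 * |a| - f n ω := fun ω => by
    have := hfa n ω
    rw [Real.norm_eq_abs]
    cases abs_cases (f n ω) <;> cases abs_cases a <;> linarith
  have hmono : ∫ ω, f 0 ω ∂μ ≤ ∫ ω, f n ω ∂μ := by
    simpa only [setIntegral_univ] using hf.setIntegral_le n.zero_le MeasurableSet.univ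
  calc ∫ ω, ‖f n ω‖ ∂μ ≤ ∫ ω, (2 * |a| - f n ω) ∂μ :=
        integral_mono (hf.integrable n).norm ((integrable_const _).sub (hf.integrable n)) hnorm
    _ = 2 * |a| * μ.real Set.univ - ∫ ω, f n ω ∂μ := by
        rw [integral_sub (integrable_const _) (hf.integrable n), integral_const, smul_eq_mul,
          mul_comm]
    _ ≤ 2 * |a| * μ.real Set.univ - ∫ ω, f 0 ω ∂μ := by linarith

theorem Supermartingale.exists_ae_tendsto_of_neg_sum_le {M w : ℕ → Ω → ℝ}
    (hM : Supermartingale M 𝓕 μ) (hw : StronglyAdapted 𝓕 w)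
    (hw_bdd : ∀ᵐ ω ∂μ, BddAbove (Set.range fun n => ∑ j ∈ range n, w j ω))
    (hMw : ∀ n ω, -∑ j ∈ range n, w j ω ≤ M n ω) :
    ∀ᵐ ω ∂μ, ∃ c, Tendsto (fun n => M n ω) atTop (𝓝 c) := by
  set W : ℕ → Ω → ℝ := fun n ω => ∑ j ∈ range (n + 1), w j ω
  have hW : StronglyAdapted 𝓕 W := fun n => hw.stronglyMeasurable_sum_range le_rfl
  have hstopped_le (a : ℝ) (ha : 0 ≤ a) (n : ℕ) (ω : Ω) :
      stoppedProcess (-M) (leastGE W a) n ω ≤ a := by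
    have hlower : ∀ m : ℕ, WithTop.some m ≤ leastGE W a ω → -a ≤ M m ω := by
      rintro (_ | k) hk
      · simpa using (neg_nonpos.2 ha).trans (by simpa using hMw 0 ω)
      · have := notMem_of_lt_hittingAfter ((WithTop.coe_lt_coe.2 k.lt_succ_self).trans_le hk)
          k.zero_le
        simp only [Set.mem_Ici, not_le] at this
        linarith [hMw (k + 1) ω]
    rw [stoppedProcess, Pi.neg_apply, Pi.neg_apply, neg_le]
    exact hlower _ ((WithTop.coe_untopD_le _ _).trans (min_le_right _ _))
  have hconv : ∀ᵐ ω ∂μ, ∀ a : ℕ,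
      ∃ c, Tendsto (fun n => stoppedProcess (-M) (leastGE W a) n ω) atTop (𝓝 c) :=
    ae_all_iff.2 fun a => (hM.neg.stoppedProcess (hW.isStoppingTime_leastGE _))
      |>.exists_ae_tendsto_of_le (hstopped_le a a.cast_nonneg)
  filter_upwards [hconv, hw_bdd] with ω hω ⟨b, hb⟩
  obtain ⟨a, ha⟩ := exists_nat_gt b
  have hτ : leastGE W a ω = ⊤ :=
    hittingAfter_eq_top_iff.2 fun j _ => not_le.2 ((hb ⟨j + 1, rfl⟩).trans_lt ha)
  obtain ⟨c, hc⟩ := hω a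
  refine ⟨-c, hc.neg.congr fun n => ?_⟩
  rw [stoppedProcess_eq_of_le (hτ ▸ le_top), Pi.neg_apply, Pi.neg_apply, neg_neg]

theorem supermartingale_add_sum_of_condExp_le {Y D : ℕ → Ω → ℝ}
    (hY : StronglyAdapted 𝓕 Y) (hD : StronglyAdapted 𝓕 D)
    (hY_int : ∀ k, Integrable (Y k) μ) (hD_int : ∀ k, Integrable (D k) μ)
    (hdescent : ∀ k, ∀ᵐ ω ∂μ, (μ[Y (k + 1)|𝓕 k]) ω ≤ Y k ω - D k ω) :
    Supermartingale (fun k ω => Y k ω + ∑ j ∈ range k, D j ω) 𝓕 μ := by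
  have hsum_int : ∀ k, Integrable (fun ω => ∑ j ∈ range k, D j ω) μ := fun k =>
    integrable_finsetSum _ fun j _ => hD_int j
  refine supermartingale_nat (fun k => (hY k).add (hD.stronglyMeasurable_sum_range k.le_succ))
    (fun k => (hY_int k).add (hsum_int k)) fun k => ?_
  have hcondExp : μ[fun ω => Y (k + 1) ω + ∑ j ∈ range (k + 1), D j ω|𝓕 k]
      =ᵐ[μ] fun ω => (μ[Y (k + 1)|𝓕 k]) ω + ∑ j ∈ range (k + 1), D j ω := by
    refine (condExp_add (hY_int (k + 1)) (hsum_int (k + 1)) _).trans ?_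
    rw [condExp_of_stronglyMeasurable (𝓕.le k) (hD.stronglyMeasurable_sum_range le_rfl)
      (hsum_int (k + 1))]
    rfl
  filter_upwards [hcondExp, hdescent k] with ω hω hdescentω
  rw [hω, sum_range_succ]
  linarith

theorem ae_tendsto_and_summable_of_condExp_le_sub_add {Y Z w : ℕ → Ω → ℝ}
    (hY_nonneg : ∀ k ω, 0 ≤ Y k ω) (hZ_nonneg : ∀ k ω, 0 ≤ Z k ω)
    (hw_nonneg : ∀ k ω, 0 ≤ w k ω)
    (hY : StronglyAdapted 𝓕 Y) (hZ : StronglyAdapted 𝓕 Z) (hw : StronglyAdapted 𝓕 w)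
    (hY_int : ∀ k, Integrable (Y k) μ) (hZ_int : ∀ k, Integrable (Z k) μ)
    (hw_int : ∀ k, Integrable (w k) μ)
    (hw_sum : ∀ᵐ ω ∂μ, Summable fun k => w k ω)
    (hdescent : ∀ k, ∀ᵐ ω ∂μ, (μ[Y (k + 1)|𝓕 k]) ω ≤ Y k ω - Z k ω + w k ω) :
    ∀ᵐ ω ∂μ, (∃ c, Tendsto (fun k => Y k ω) atTop (𝓝 c)) ∧
      Summable fun k => Z k ω := by
  have hM := supermartingale_add_sum_of_condExp_le hY (fun k => (hZ k).sub (hw k)) hY_int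
    (fun k => (hZ_int k).sub (hw_int k)) fun k => by
      filter_upwards [hdescent k] with ω hω
      simp only [Pi.sub_apply]
      linarith
  have hMw : ∀ k ω, -∑ j ∈ range k, w j ω ≤ Y k ω + ∑ j ∈ range k, (Z - w) j ω := by
    intro k ω
    have := sum_nonneg fun j (_ : j ∈ range k) => hZ_nonneg j ω
    simp only [Pi.sub_apply, sum_sub_distrib]
    linarith [hY_nonneg k ω]
  have hw_bdd : ∀ᵐ ω ∂μ, BddAbove (Set.range fun k => ∑ j ∈ range k, w j ω) := by
    filter_upwards [hw_sum] with ω hω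
    exact ⟨∑' j, w j ω, by
      rintro _ ⟨k, rfl⟩
      exact hω.sum_le_tsum _ fun j _ => hw_nonneg j ω⟩
  filter_upwards [hM.exists_ae_tendsto_of_neg_sum_le hw hw_bdd hMw, hw_sum] with ω ⟨c, hc⟩ hω
  have hYZ :
      Tendsto (fun k => Y k ω + ∑ j ∈ range k, Z j ω) atTop (𝓝 (c + ∑' j, w j ω)) :=
    (hc.add hω.hasSum.tendsto_sum_nat).congr fun k => by
      simp only [Pi.sub_apply, sum_sub_distrib]
      ring
  obtain ⟨b, hb⟩ := hYZ.bddAbove_range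
  have hZ_sum : Summable fun k => Z k ω :=
    summable_of_sum_range_le (fun k => hZ_nonneg k ω) fun k =>
      le_trans (le_add_of_nonneg_left (hY_nonneg k ω)) (hb ⟨k, rfl⟩)
  refine ⟨⟨_, (hYZ.sub hZ_sum.hasSum.tendsto_sum_nat).congr fun k => ?_⟩, hZ_sum⟩
  ring

theorem robbins_siegmund {Y Z w : ℕ → Ω → ℝ} {u : ℕ → ℝ}
    (hY_nonneg : ∀ k ω, 0 ≤ Y k ω) (hZ_nonneg : ∀ k ω, 0 ≤ Z k ω)
    (hw_nonneg : ∀ k ω, 0 ≤ w k ω)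
    (hY : StronglyAdapted 𝓕 Y) (hZ : StronglyAdapted 𝓕 Z) (hw : StronglyAdapted 𝓕 w)
    (hY_int : ∀ k, Integrable (Y k) μ) (hZ_int : ∀ k, Integrable (Z k) μ)
    (hw_int : ∀ k, Integrable (w k) μ)
    (hu : ∀ k, 0 ≤ u k) (hu_sum : Summable u) (hw_sum : ∀ᵐ ω ∂μ, Summable fun k => w k ω)
    (hdescent : ∀ k, ∀ᵐ ω ∂μ,
      (μ[Y (k + 1)|𝓕 k]) ω ≤ (1 + u k) * Y k ω - Z k ω + w k ω) :
    ∀ᵐ ω ∂μ, (∃ c, Tendsto (fun k => Y k ω) atTop (𝓝 c)) ∧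
      Summable fun k => Z k ω := by
  set P : ℕ → ℝ := fun k => ∏ j ∈ range k, (1 + u j)
  have hP_one : ∀ k, 1 ≤ P k := fun k =>
    Finset.one_le_prod fun j _ => le_add_of_nonneg_right (hu j)
  have hP_pos : ∀ k, 0 < P k := fun k => zero_lt_one.trans_le (hP_one k)
  have hP_inv_nonneg : ∀ k, 0 ≤ (P k)⁻¹ := fun k => inv_nonneg.2 (hP_pos k).le
  have hP_succ : ∀ k, P (k + 1) = P k * (1 + u k) := fun k => prod_range_succ _ _
  have hP_tendsto : Tendsto P atTop (𝓝 (∏' j, (1 + u j))) :=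
    (Real.multipliable_one_add_of_summable hu_sum).hasProd.tendsto_prod_nat
  obtain ⟨B, hB⟩ := hP_tendsto.bddAbove_range
  have hrescaled := ae_tendsto_and_summable_of_condExp_le_sub_add
    (Y := fun k ω => (P k)⁻¹ * Y k ω) (Z := fun k ω => (P (k + 1))⁻¹ * Z k ω)
    (w := fun k ω => (P (k + 1))⁻¹ * w k ω)
    (fun k ω => mul_nonneg (hP_inv_nonneg k) (hY_nonneg k ω))
    (fun k ω => mul_nonneg (hP_inv_nonneg _) (hZ_nonneg k ω))
    (fun k ω => mul_nonneg (hP_inv_nonneg _) (hw_nonneg k ω))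
    (fun k => (hY k).const_mul _) (fun k => (hZ k).const_mul _) (fun k => (hw k).const_mul _)
    (fun k => (hY_int k).const_mul _) (fun k => (hZ_int k).const_mul _)
    (fun k => (hw_int k).const_mul _)
    (by
      filter_upwards [hw_sum] with ω hω
      exact hω.of_nonneg_of_le (fun k => mul_nonneg (hP_inv_nonneg _) (hw_nonneg k ω))
        fun k => mul_le_of_le_one_left (hw_nonneg k ω) (inv_le_one_of_one_le₀ (hP_one _)))
    fun k => by
      filter_upwards [condExp_smul (μ := μ) (P (k + 1))⁻¹ (Y (k + 1)) (𝓕 k), hdescent k]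
        with ω hω hdescentω
      have hP_inv : (P (k + 1))⁻¹ * (1 + u k) = (P k)⁻¹ := by
        rw [hP_succ, mul_inv, mul_assoc, inv_mul_cancel₀ (by linarith [hu k]), mul_one]
      calc (μ[fun ω => (P (k + 1))⁻¹ * Y (k + 1) ω|𝓕 k]) ω
          = (P (k + 1))⁻¹ * (μ[Y (k + 1)|𝓕 k]) ω := hω
        _ ≤ (P (k + 1))⁻¹ * ((1 + u k) * Y k ω - Z k ω + w k ω) :=
          mul_le_mul_of_nonneg_left hdescentω (hP_inv_nonneg _)
        _ = (P k)⁻¹ * Y k ω - (P (k + 1))⁻¹ * Z k ω + (P (k + 1))⁻¹ * w k ω := by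
          rw [← hP_inv]
          ring
  filter_upwards [hrescaled] with ω ⟨⟨c, hc⟩, hZ_sum⟩
  refine ⟨⟨_, (hP_tendsto.mul hc).congr fun k => ?_⟩, ?_⟩
  · field_simp [(hP_pos k).ne']
  · refine (hZ_sum.mul_left B).of_nonneg_of_le (fun k => hZ_nonneg k ω) fun k => ?_
    calc Z k ω = P (k + 1) * ((P (k + 1))⁻¹ * Z k ω) := by field_simp [(hP_pos _).ne']
      _ ≤ B * ((P (k + 1))⁻¹ * Z k ω) := mul_le_mul_of_nonneg_right (hB ⟨k + 1, rfl⟩)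
          (mul_nonneg (hP_inv_nonneg _) (hZ_nonneg k ω))

end MeasureTheory

theorem tendsto_zero_of_summable_mul_norm_sq {E : Type*} [SeminormedAddCommGroup E]
    {v : ℕ → ℝ} {g : ℕ → E} {ε : ℝ} (hε : 0 < ε) (hεv : ∀ k, ε ≤ v k)
    (h : Summable fun k => v k * ‖g k‖ ^ 2) : Tendsto g atTop (𝓝 0) := by
  have hsq : Summable fun k => ‖g k‖ ^ 2 :=
    (h.mul_left ε⁻¹).of_nonneg_of_le (fun k => sq_nonneg _) fun k => by
      rw [← mul_assoc]
      exact le_mul_of_one_le_left (sq_nonneg _) ((one_le_inv_mul₀ hε).2 (hεv k))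
  refine tendsto_zero_iff_norm_tendsto_zero.2 ?_
  simpa [Real.sqrt_sq (norm_nonneg _)] using hsq.tendsto_atTop_zero.sqrt

theorem assumption2_of_assumption4_general
    {H : Type*} [NormedAddCommGroup H] [InnerProductSpace ℝ H] [FiniteDimensional ℝ H]
    {Ω : Type*} {m0 : MeasurableSpace Ω} (μ : Measure Ω) [IsProbabilityMeasure μ]
    (𝓕 : Filtration ℕ m0)
    (F : H → ℝ)
    (Fstar : ℝ) (hFstar : IsLeast (Set.range F) Fstar)
    (x : ℕ → Ω → H)
    (hFx_adapted : ∀ k, StronglyMeasurable[𝓕 k] (fun ω => F (x k ω)))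
    (hFx_int : ∀ k, Integrable (fun ω => F (x k ω)) μ)
    (hgradx_adapted : ∀ k, StronglyMeasurable[𝓕 k] (fun ω => ‖gradient F (x k ω)‖ ^ 2))
    (hgradx_int : ∀ k, Integrable (fun ω => ‖gradient F (x k ω)‖ ^ 2) μ)
    (u v : ℕ → ℝ) (w : ℕ → Ω → ℝ)
    (hu : ∀ k, 0 ≤ u k) (hv : ∀ k, 0 ≤ v k)
    (hw_nonneg : ∀ k ω, 0 ≤ w k ω)
    (hw_adapted : ∀ k, StronglyMeasurable[𝓕 k] (w k))
    (hw_int : ∀ k, Integrable (w k) μ)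
    (hu_sum : Summable u)
    (hv_inf : ∃ ε > (0:ℝ), ∀ k, ε ≤ v k)
    (hw_sum : ∀ᵐ ω ∂μ, Summable fun k => w k ω)
    (hdescent : ∀ k, ∀ᵐ ω ∂μ,
      (μ[fun ω' => F (x (k + 1) ω') - Fstar | 𝓕 k]) ω ≤
        (1 + u k) * (F (x k ω) - Fstar) - v k * ‖gradient F (x k ω)‖ ^ 2 + w k ω) :
    ∃ Finf : Ω → ℝ,
      (∀ᵐ ω ∂μ, Tendsto (fun k => F (x k ω)) atTop (𝓝 (Finf ω))) ∧
      (∀ᵐ ω ∂μ, Tendsto (fun k => gradient F (x k ω)) atTop (𝓝 (0 : H))) ∧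
      (∀ᵐ ω ∂μ, Summable fun k => v k * ‖gradient F (x k ω)‖ ^ 2) := by
  obtain ⟨ε, hε, hεv⟩ := hv_inf
  have hRS := robbins_siegmund (Y := fun k ω => F (x k ω) - Fstar)
    (Z := fun k ω => v k * ‖gradient F (x k ω)‖ ^ 2)
    (fun k ω => sub_nonneg.2 (hFstar.2 ⟨x k ω, rfl⟩))
    (fun k ω => mul_nonneg (hv k) (sq_nonneg _))
    hw_nonneg (fun k => (hFx_adapted k).sub stronglyMeasurable_const)
    (fun k => (hgradx_adapted k).const_mul _) hw_adapted
    (fun k => (hFx_int k).sub (integrable_const _)) (fun k => (hgradx_int k).const_mul _) hw_int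
    hu hu_sum hw_sum hdescent
  refine ⟨fun ω => limUnder atTop fun k => F (x k ω), ?_,
    hRS.mono fun ω hω => tendsto_zero_of_summable_mul_norm_sq hε hεv hω.2,
    hRS.mono fun ω hω => hω.2⟩
  filter_upwards [hRS] with ω hω
  obtain ⟨c, hc⟩ := hω.1
  exact tendsto_nhds_limUnder ⟨c + Fstar, by simpa using hc.add_const Fstar⟩

/-- Under Assumption 1 (coercivity, continuous differentiability) and
Assumption 4 (adapted integrable processes, quasi-supermartingale descent inequality and
conditional step bound), Assumption 2 holds: `F (x k)` converges a.s. to an a.s. finite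
random variable `Finf`, `∇F (x k) → 0` a.s., and `∑ v k ‖∇F (x k)‖² < ∞` a.s. -/
theorem assumption2_of_assumption4
    {H : Type*} [NormedAddCommGroup H] [InnerProductSpace ℝ H] [FiniteDimensional ℝ H]
    {Ω : Type*} {m0 : MeasurableSpace Ω} (μ : Measure Ω) [IsProbabilityMeasure μ]
    (𝓕 : Filtration ℕ m0)
    (F : H → ℝ)
    (hF_coercive : Tendsto F (Bornology.cobounded H) atTop)
    (hF_smooth : ContDiff ℝ 1 F)
    (Fstar : ℝ) (hFstar : IsLeast (Set.range F) Fstar)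
    (x : ℕ → Ω → H)
    (hFx_adapted : ∀ k, StronglyMeasurable[𝓕 k] (fun ω => F (x k ω)))
    (hFx_int : ∀ k, Integrable (fun ω => F (x k ω)) μ)
    (hgradx_adapted : ∀ k, StronglyMeasurable[𝓕 k] (fun ω => ‖gradient F (x k ω)‖ ^ 2))
    (hgradx_int : ∀ k, Integrable (fun ω => ‖gradient F (x k ω)‖ ^ 2) μ)
    (u v r s t : ℕ → ℝ) (w : ℕ → Ω → ℝ)
    (hu : ∀ k, 0 ≤ u k) (hv : ∀ k, 0 ≤ v k) (hr : ∀ k, 0 ≤ r k)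
    (hs : ∀ k, 0 ≤ s k) (ht : ∀ k, 0 ≤ t k)
    (hw_nonneg : ∀ k ω, 0 ≤ w k ω)
    (hw_adapted : ∀ k, StronglyMeasurable[𝓕 k] (w k))
    (hw_int : ∀ k, Integrable (w k) μ)
    (hu_sum : Summable u)
    (hv_inf : ∃ ε > (0:ℝ), ∀ k, ε ≤ v k)
    (hr_sum : Summable r) (ht_sum : Summable t)
    (hw_sum : ∀ᵐ ω ∂μ, Summable fun k => w k ω)
    (hdescent : ∀ k, ∀ᵐ ω ∂μ,
      (μ[fun ω' => F (x (k + 1) ω') - Fstar | 𝓕 k]) ω ≤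
        (1 + u k) * (F (x k ω) - Fstar) - v k * ‖gradient F (x k ω)‖ ^ 2 + w k ω)
    (hstep : ∀ k, ∀ᵐ ω ∂μ,
      (μ[fun ω' => ‖x (k + 1) ω' - x k ω'‖ | 𝓕 k]) ω ≤
        r k * Real.sqrt (F (x k ω) - Fstar) + s k * ‖gradient F (x k ω)‖ + t k) :
    ∃ Finf : Ω → ℝ,
      (∀ᵐ ω ∂μ, Tendsto (fun k => F (x k ω)) atTop (𝓝 (Finf ω))) ∧
      (∀ᵐ ω ∂μ, Tendsto (fun k => gradient F (x k ω)) atTop (𝓝 (0 : H))) ∧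
      (∀ᵐ ω ∂μ, Summable fun k => v k * ‖gradient F (x k ω)‖ ^ 2) :=
  assumption2_of_assumption4_general μ 𝓕 F Fstar hFstar x hFx_adapted hFx_int hgradx_adapted
    hgradx_int u v w hu hv hw_nonneg hw_adapted hw_int hu_sum hv_inf hw_sum hdescent
end

section
/- Let (x_k) be a stochastic process with values in a finite-dimensional real Hilbert space H, and suppose Assumption 1, Assumption 3 and Assumption 4 hold. Assume further that the sequence (s_k p_k / v_k) is non-increasing and that there exists γ ∈ (0,1) with P(Ξ_γ) = 1. Let φ ∈ Φ_{+∞} be bounded, and define Γ_φ = ∑_{k=1}^∞ (s_k p_k / v_k) [ φ( L_k(x_k, w_0, …, w_{k−1}) − L_{k,∞} ) − φ( E[L_{k+1}(x_{k+1}, w_0, …, w_k) | 𝓕_k] − E[L_{k+1,∞} | 𝓕_k] ) ]. Then Γ_φ < +∞ almost surely. -/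
open MeasureTheory Filter Topology

/-- `φ ∈ Φ_{+∞}`. -/
def IsPhiTop (φ : ℝ → ℝ) : Prop :=
  ConcaveOn ℝ (Set.Ici 0) φ ∧
  (∀ s ∈ Set.Ici (0:ℝ), 0 ≤ φ s) ∧
  φ 0 = 0 ∧
  ContinuousWithinAt φ (Set.Ici 0) 0 ∧
  (∀ s ∈ Set.Ioi (0:ℝ), HasDerivAt φ (deriv φ s) s) ∧
  ContinuousOn (deriv φ) (Set.Ioi 0) ∧
  (∀ s ∈ Set.Ioi (0:ℝ), 0 < deriv φ s)

/-! With `Δ k = L k - Linf k`, the descent inequality and the bound defining `Ξ_γ` (with `γ ≤ 1`)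
give `E[Δ (k+1) | 𝓕 k] ≤ Δ k`, while `F∞ < F (x k)` gives `Δ k ≥ 0`; as `φ` is non-decreasing the
terms of `Γ_φ` are therefore non-negative. By the conditional Jensen inequality for the concave `φ`,
`E φ(Δ (k+1)) ≤ E φ(E[Δ (k+1) | 𝓕 k])`, so the expectation of the `k`-th term is at most
`c k (E φ(Δ k) - E φ(Δ (k+1)))` with `c k = s k p k / v k` non-increasing. Abel summation bounds
these by `c 1 · sup φ`, so `Γ_φ` is integrable, hence a.s. finite. -/

open Set Finset

lemma IsPhiTop.continuousOn {φ : ℝ → ℝ} (hφ : IsPhiTop φ) : ContinuousOn φ (Ici 0) := by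
  obtain ⟨-, -, -, hcont0, hderiv, -, -⟩ := hφ
  intro z hz
  rcases (mem_Ici.mp hz).eq_or_lt with rfl | hz
  · exact hcont0
  · exact (hderiv z hz).continuousAt.continuousWithinAt

lemma IsPhiTop.monotoneOn {φ : ℝ → ℝ} (hφ : IsPhiTop φ) : MonotoneOn φ (Ici 0) :=
  (strictMonoOn_of_deriv_pos (convex_Ici 0) hφ.continuousOn fun z hz =>
    hφ.2.2.2.2.2.2 z (by rwa [interior_Ici] at hz)).monotoneOn

lemma Finset.sum_range_mul_sub_succ_le {c a : ℕ → ℝ} {A : ℝ} (hc : Antitone c)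
    (hc0 : ∀ k, 0 ≤ c k) (ha0 : ∀ k, 0 ≤ a k) (haA : ∀ k, a k ≤ A) (n : ℕ) :
    ∑ k ∈ range n, c k * (a k - a (k + 1)) ≤ c 0 * A := by
  have abel : ∀ n, ∑ k ∈ range n, c k * (a k - a (k + 1)) ≤ c 0 * a 0 - c n * a n := by
    intro n
    induction n with
    | zero => simp
    | succ n ih =>
      rw [sum_range_succ]
      nlinarith [hc n.le_succ, ha0 (n + 1)]
  nlinarith [abel n, hc0 0, hc0 n, ha0 n, haA 0]

lemma one_le_prod_one_add {u : ℕ → ℝ} (hu : ∀ k, 0 ≤ u k) (s : Finset ℕ) :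
    1 ≤ ∏ i ∈ s, (1 + u i) :=
  one_le_prod fun i _ => le_add_of_nonneg_right (hu i)

lemma monotone_prod_range_one_add {u : ℕ → ℝ} (hu : ∀ k, 0 ≤ u k) :
    Monotone fun n => ∏ i ∈ range n, (1 + u i) :=
  monotone_nat_of_le_succ fun n => by
    rw [prod_range_succ]
    exact le_mul_of_one_le_right (zero_le_one.trans (one_le_prod_one_add hu _))
      (le_add_of_nonneg_right (hu n))

section

variable {Ω : Type*} {m m0 : MeasurableSpace Ω} {μ : Measure Ω}

lemma ae_summable_of_sum_integral_le {T : ℕ → Ω → ℝ} (hT_int : ∀ k, Integrable (T k) μ)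
    (hT0 : ∀ k, 0 ≤ᵐ[μ] T k) {B : ℝ} (hB : ∀ n, ∑ k ∈ range n, ∫ ω, T k ω ∂μ ≤ B) :
    ∀ᵐ ω ∂μ, Summable fun k => T k ω := by
  have hmeas : ∀ k, AEMeasurable (fun ω => ENNReal.ofReal (T k ω)) μ :=
    fun k => (hT_int k).aemeasurable.ennreal_ofReal
  have hfin : ∫⁻ ω, ∑' k, ENNReal.ofReal (T k ω) ∂μ ≠ ⊤ := by
    rw [lintegral_tsum hmeas]
    refine ne_top_of_le_ne_top (ENNReal.ofReal_ne_top (r := B))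
      (ENNReal.tsum_le_of_sum_range_le fun n => ?_)
    simp_rw [← ofReal_integral_eq_lintegral_ofReal (hT_int _) (hT0 _),
      ← ENNReal.ofReal_sum_of_nonneg fun k _ => integral_nonneg_of_ae (hT0 k)]
    exact ENNReal.ofReal_le_ofReal (hB n)
  filter_upwards [ae_lt_top' (AEMeasurable.tsum hmeas) hfin, ae_all_iff.2 hT0]
    with ω hω hω0
  exact (ENNReal.summable_toReal hω.ne).congr fun k => ENNReal.toReal_ofReal (hω0 k)

lemma ContinuousOn.aestronglyMeasurable_comp_of_nonneg {φ : ℝ → ℝ} (hφ : ContinuousOn φ (Ici 0))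
    {X : Ω → ℝ} (hX : AEStronglyMeasurable X μ) (hX0 : 0 ≤ᵐ[μ] X) :
    AEStronglyMeasurable (fun ω => φ (X ω)) μ := by
  have hcont : Continuous fun z => φ (max z 0) :=
    hφ.comp_continuous (continuous_id.max continuous_const) fun z => le_max_right z 0
  refine (hcont.comp_aestronglyMeasurable hX).congr ?_
  filter_upwards [hX0] with ω hω
  simp [max_eq_left (show 0 ≤ X ω from hω)]

lemma ContinuousOn.integrable_comp_of_nonneg [IsFiniteMeasure μ] {φ : ℝ → ℝ}
    (hφ : ContinuousOn φ (Ici 0)) {M : ℝ} (hφ_bdd : ∀ z ∈ Ici (0 : ℝ), |φ z| ≤ M) {X : Ω → ℝ}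
    (hX : AEStronglyMeasurable X μ) (hX0 : 0 ≤ᵐ[μ] X) :
    Integrable (fun ω => φ (X ω)) μ :=
  .of_bound (hφ.aestronglyMeasurable_comp_of_nonneg hX hX0) M
    (by filter_upwards [hX0] with ω hω using hφ_bdd _ hω)

lemma ConcaveOn.integral_comp_le_integral_comp_condExp [IsFiniteMeasure μ] (hm : m ≤ m0)
    {φ : ℝ → ℝ} (hφ : ConcaveOn ℝ (Ici 0) φ) (hφ_cont : ContinuousOn φ (Ici 0)) {M : ℝ}
    (hφ_bdd : ∀ z ∈ Ici (0 : ℝ), |φ z| ≤ M) {X : Ω → ℝ} (hX : Integrable X μ)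
    (hX0 : 0 ≤ᵐ[μ] X) :
    ∫ ω, φ (X ω) ∂μ ≤ ∫ ω, φ ((μ[X|m]) ω) ∂μ := by
  have hY_int : Integrable (fun ω => φ ((μ[X|m]) ω)) μ :=
    hφ_cont.integrable_comp_of_nonneg hφ_bdd integrable_condExp.1 (condExp_nonneg hX0)
  have jensen := hφ.condExp_map_le hm hφ_cont.upperSemicontinuousOn hX0 isClosed_Ici hX
    (hφ_cont.integrable_comp_of_nonneg hφ_bdd hX.1 hX0)
  calc ∫ ω, φ (X ω) ∂μ = ∫ ω, (μ[φ ∘ X|m]) ω ∂μ := (integral_condExp hm).symm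
    _ ≤ ∫ ω, φ ((μ[X|m]) ω) ∂μ :=
      integral_mono_ae integrable_condExp hY_int jensen

lemma ae_summable_mul_sub_comp_condExp_succ [IsFiniteMeasure μ] {𝓖 : ℕ → MeasurableSpace Ω}
    (h𝓖 : ∀ k, 𝓖 k ≤ m0) {φ : ℝ → ℝ} (hφ_conc : ConcaveOn ℝ (Ici 0) φ)
    (hφ_cont : ContinuousOn φ (Ici 0)) (hφ_mono : MonotoneOn φ (Ici 0)) {M : ℝ}
    (hφ_nonneg : ∀ z ∈ Ici (0 : ℝ), 0 ≤ φ z) (hφ_le : ∀ z ∈ Ici (0 : ℝ), φ z ≤ M)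
    {c : ℕ → ℝ} (hc : Antitone c) (hc0 : ∀ k, 0 ≤ c k)
    {D : ℕ → Ω → ℝ} (hD_int : ∀ k, Integrable (D k) μ) (hD0 : ∀ k, 0 ≤ᵐ[μ] D k)
    (hD_super : ∀ k, μ[D (k + 1)|𝓖 k] ≤ᵐ[μ] D k) :
    ∀ᵐ ω ∂μ, Summable fun k => c k * (φ (D k ω) - φ ((μ[D (k + 1)|𝓖 k]) ω)) := by
  have hφ_bdd : ∀ z ∈ Ici (0 : ℝ), |φ z| ≤ M := fun z hz =>
    (abs_of_nonneg (hφ_nonneg z hz)).trans_le (hφ_le z hz)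
  have hE0 : ∀ k, 0 ≤ᵐ[μ] μ[D (k + 1)|𝓖 k] := fun k => condExp_nonneg (hD0 (k + 1))
  have hφD_int : ∀ k, Integrable (fun ω => φ (D k ω)) μ := fun k =>
    hφ_cont.integrable_comp_of_nonneg hφ_bdd (hD_int k).1 (hD0 k)
  have hφE_int : ∀ k, Integrable (fun ω => φ ((μ[D (k + 1)|𝓖 k]) ω)) μ := fun k =>
    hφ_cont.integrable_comp_of_nonneg hφ_bdd integrable_condExp.1 (hE0 k)
  set a : ℕ → ℝ := fun k => ∫ ω, φ (D k ω) ∂μ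
  have ha0 : ∀ k, 0 ≤ a k := fun k => integral_nonneg_of_ae (by
    filter_upwards [hD0 k] with ω hω using hφ_nonneg _ hω)
  have haM : ∀ k, a k ≤ μ.real univ * M := fun k => by
    rw [← smul_eq_mul, ← integral_const]
    exact integral_mono_ae (hφD_int k) (integrable_const M) (by
      filter_upwards [hD0 k] with ω hω using hφ_le _ hω)
  have hT_int : ∀ k, Integrable (fun ω => c k * (φ (D k ω) - φ ((μ[D (k + 1)|𝓖 k]) ω))) μ :=
    fun k => ((hφD_int k).sub (hφE_int k)).const_mul (c k)
  have hT0 : ∀ k, 0 ≤ᵐ[μ] fun ω => c k * (φ (D k ω) - φ ((μ[D (k + 1)|𝓖 k]) ω)) := fun k => by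
    filter_upwards [hE0 k, hD_super k] with ω hE hED
    exact mul_nonneg (hc0 k) (sub_nonneg.2 (hφ_mono hE (hE.trans hED) hED))
  have hT_le : ∀ k, ∫ ω, c k * (φ (D k ω) - φ ((μ[D (k + 1)|𝓖 k]) ω)) ∂μ ≤
      c k * (a k - a (k + 1)) := fun k => by
    rw [integral_const_mul, integral_sub (hφD_int k) (hφE_int k)]
    have jensen := hφ_conc.integral_comp_le_integral_comp_condExp (h𝓖 k) hφ_cont hφ_bdd
      (hD_int (k + 1)) (hD0 (k + 1))
    exact mul_le_mul_of_nonneg_left (by linarith) (hc0 k)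
  exact ae_summable_of_sum_integral_le hT_int hT0 fun n =>
    (sum_le_sum fun k _ => hT_le k).trans (sum_range_mul_sub_succ_le hc hc0 ha0 haM n)

lemma MeasureTheory.Integrable.of_abs_sub_le {X Y Z : Ω → ℝ} (hX : AEStronglyMeasurable X μ)
    (hY : Integrable Y μ) (hZ : Integrable Z μ) (h : ∀ᵐ ω ∂μ, |X ω - Y ω| ≤ Z ω) :
    Integrable X μ := by
  have hXY : Integrable (X - Y) μ := hZ.mono' (hX.sub hY.1) h
  simpa using hXY.add hY

lemma ae_forall_imp_of_measure_eq_one [IsProbabilityMeasure μ] {q : ℕ → Prop}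
    {P : ℕ → Ω → Prop} (hP : ∀ k, q k → NullMeasurableSet {ω | P k ω} μ)
    (h : μ {ω | ∀ k, q k → P k ω} = 1) :
    ∀ᵐ ω ∂μ, ∀ k, q k → P k ω := by
  have hmeas : NullMeasurableSet {ω | ∀ k, q k → P k ω} μ := by
    refine ofPred_forall (fun k ω => q k → P k ω) ▸ .iInter fun k => ?_
    by_cases hk : q k
    · simpa only [hk, forall_true_left] using hP k hk
    · simpa only [hk, false_implies, ofPred_true] using nullMeasurableSet_univ
  exact (ae_iff_measure_eq hmeas).2 (by rw [h, measure_univ])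

lemma condExp_sub_le_of_le_of_abs_sub_le
    {X Y X₀ Y₀ a : Ω → ℝ} {γ : ℝ} (hX : Integrable X μ) (hY : Integrable Y μ)
    (hXa : ∀ᵐ ω ∂μ, (μ[X|m]) ω ≤ X₀ ω - a ω) (hYa : ∀ᵐ ω ∂μ, |Y₀ ω - (μ[Y|m]) ω| ≤ γ * a ω)
    (hγ : γ ≤ 1) (ha : ∀ᵐ ω ∂μ, 0 ≤ a ω) :
    μ[X - Y|m] ≤ᵐ[μ] X₀ - Y₀ := by
  filter_upwards [condExp_sub hX hY m, hXa, hYa, ha] with ω hsub hXω hYω haω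
  rw [hsub, Pi.sub_apply, Pi.sub_apply]
  nlinarith [(abs_le.1 hYω).2]

end

/-! `L k = f k / p (k - 1) - ∑_{i<k} w i / p i` is the normalisation of a Robbins–Siegmund
process `f`, and `Linf` the same with `f k` replaced by its limit `fInf`. At `k = 0` the truncated
subtraction makes `p (k - 1) = p 0`, so everything is stated at indices `k + 1`. -/

section

variable {Ω : Type*} {m0 : MeasurableSpace Ω} {μ : Measure Ω} {𝓕 : Filtration ℕ m0}
  {f g w L Linf : ℕ → Ω → ℝ} {fInf : Ω → ℝ} {u v p : ℕ → ℝ}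

lemma condExp_normalized_succ_le [IsFiniteMeasure μ] (hf_int : ∀ k, Integrable (f k) μ)
    (hw_adapted : ∀ k, StronglyMeasurable[𝓕 k] (w k)) (hw_int : ∀ k, Integrable (w k) μ)
    (hp_pos : ∀ k, 0 < p k) (hp_succ : ∀ k, p (k + 1) = p k * (1 + u (k + 1)))
    (hdescent : ∀ k, ∀ᵐ ω ∂μ,
      (μ[f (k + 1)|𝓕 k]) ω ≤ (1 + u k) * f k ω - v k * g k ω + w k ω)
    (hL : ∀ k ω, L k ω = f k ω / p (k - 1) - ∑ i ∈ range k, w i ω / p i) (k : ℕ) :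
    ∀ᵐ ω ∂μ, (μ[L (k + 2)|𝓕 (k + 1)]) ω ≤ L (k + 1) ω - v (k + 1) / p (k + 1) * g (k + 1) ω := by
  set S : Ω → ℝ := fun ω => ∑ i ∈ range (k + 2), w i ω / p i
  have hS_meas : StronglyMeasurable[𝓕 (k + 1)] S :=
    Finset.stronglyMeasurable_fun_sum _ fun i hi =>
      (((hw_adapted i).mono (𝓕.mono (by simpa [Nat.lt_succ_iff] using hi))).measurable.div_const
        _).stronglyMeasurable
  have hS_int : Integrable S μ := integrable_finsetSum _ fun i _ => (hw_int i).div_const _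
  have hL_eq : L (k + 2) = (p (k + 1))⁻¹ • f (k + 2) - S := funext fun ω => by
    simp [hL, S, div_eq_inv_mul]
  have hcond : μ[L (k + 2)|𝓕 (k + 1)] =ᵐ[μ] (p (k + 1))⁻¹ • μ[f (k + 2)|𝓕 (k + 1)] - S := by
    rw [hL_eq]
    refine (condExp_sub ((hf_int _).smul (p (k + 1))⁻¹) hS_int _).trans
      ((condExp_smul _ _ _).sub ?_)
    rw [condExp_of_stronglyMeasurable (𝓕.le (k + 1)) hS_meas hS_int]
  filter_upwards [hcond, hdescent (k + 1)] with ω hcondω hdescω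
  have hp_ne : p k * (1 + u (k + 1)) ≠ 0 := hp_succ k ▸ (hp_pos (k + 1)).ne'
  have hp_ne' : p k ≠ 0 := left_ne_zero_of_mul hp_ne
  have hu_ne : 1 + u (k + 1) ≠ 0 := right_ne_zero_of_mul hp_ne
  calc (μ[L (k + 2)|𝓕 (k + 1)]) ω
      ≤ (p (k + 1))⁻¹ * ((1 + u (k + 1)) * f (k + 1) ω - v (k + 1) * g (k + 1) ω + w (k + 1) ω)
          - S ω := by
        rw [hcondω, Pi.sub_apply, Pi.smul_apply, smul_eq_mul]
        exact sub_le_sub_right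
          (mul_le_mul_of_nonneg_left hdescω (inv_nonneg.2 (hp_pos _).le)) _
    _ = L (k + 1) ω - v (k + 1) / p (k + 1) * g (k + 1) ω := by
        simp only [S, hL, sum_range_succ, Nat.add_sub_cancel]
        rw [hp_succ k]
        field_simp
        ring

lemma normalized_sub_limit_nonneg (hp_pos : ∀ k, 0 < p k) (hp_mono : Monotone p)
    (hL : ∀ k ω, L k ω = f k ω / p (k - 1) - ∑ i ∈ range k, w i ω / p i)
    (hLinf : ∀ k ω, Linf k ω = fInf ω / p k - ∑ i ∈ range k, w i ω / p i) {k : ℕ} {ω : Ω}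
    (hf : 0 ≤ f (k + 1) ω) (hfInf : fInf ω ≤ f (k + 1) ω) :
    0 ≤ L (k + 1) ω - Linf (k + 1) ω := by
  rw [hL, hLinf, Nat.add_sub_cancel, sub_sub_sub_cancel_right, sub_nonneg]
  calc fInf ω / p (k + 1)
      ≤ f (k + 1) ω / p (k + 1) := div_le_div_of_nonneg_right hfInf (hp_pos _).le
    _ ≤ f (k + 1) ω / p k := div_le_div_of_nonneg_left hf (hp_pos k) (hp_mono k.le_succ)

lemma aemeasurable_limit_normalized (hfInf : AEMeasurable fInf μ)
    (hw : ∀ k, AEMeasurable (w k) μ)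
    (hLinf : ∀ k ω, Linf k ω = fInf ω / p k - ∑ i ∈ range k, w i ω / p i) (k : ℕ) :
    AEMeasurable (Linf k) μ := by
  rw [show Linf k = _ from funext (hLinf k)]
  exact (hfInf.div_const _).sub (Finset.aemeasurable_fun_sum _ fun i _ => (hw i).div_const _)

lemma integrable_normalized (hf_int : ∀ k, Integrable (f k) μ)
    (hw_int : ∀ k, Integrable (w k) μ)
    (hL : ∀ k ω, L k ω = f k ω / p (k - 1) - ∑ i ∈ range k, w i ω / p i) (k : ℕ) :
    Integrable (L k) μ := by
  rw [show L k = _ from funext (hL k)]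
  exact ((hf_int k).div_const _).sub (integrable_finsetSum _ fun i _ => (hw_int i).div_const _)

lemma integrable_limit_normalized (hw_int : ∀ k, Integrable (w k) μ) (hp_pos : ∀ k, 0 < p k)
    (hLinf : ∀ k ω, Linf k ω = fInf ω / p k - ∑ i ∈ range k, w i ω / p i) {j : ℕ}
    (hj : Integrable (Linf j) μ) (k : ℕ) : Integrable (Linf k) μ := by
  have hS_int : ∀ k, Integrable (fun ω => ∑ i ∈ range k, w i ω / p i) μ := fun k =>
    integrable_finsetSum _ fun i _ => (hw_int i).div_const _
  have hfInf_int : Integrable fInf μ := by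
    have h : fInf = fun ω => p j * (Linf j ω + ∑ i ∈ range j, w i ω / p i) := funext fun ω => by
      rw [hLinf]
      field_simp [(hp_pos j).ne']
      ring
    rw [h]
    exact (hj.add (hS_int j)).const_mul _
  rw [show Linf k = _ from funext (hLinf k)]
  exact (hfInf_int.div_const _).sub (hS_int k)

lemma ae_summable_normalized_gap [IsFiniteMeasure μ] {φ : ℝ → ℝ} (hφ : IsPhiTop φ) {M : ℝ}
    (hM : ∀ z ∈ Ici (0 : ℝ), φ z ≤ M) {c : ℕ → ℝ} (hc : Antitone c) (hc0 : ∀ k, 0 ≤ c k)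
    (hf_int : ∀ k, Integrable (f k) μ) (hf0 : ∀ k ω, 0 ≤ f k ω) (hg0 : ∀ k ω, 0 ≤ g k ω)
    (hw_adapted : ∀ k, StronglyMeasurable[𝓕 k] (w k)) (hw_int : ∀ k, Integrable (w k) μ)
    (hv : ∀ k, 0 ≤ v k) (hp_pos : ∀ k, 0 < p k) (hp_mono : Monotone p)
    (hp_succ : ∀ k, p (k + 1) = p k * (1 + u (k + 1)))
    (hdescent : ∀ k, ∀ᵐ ω ∂μ,
      (μ[f (k + 1)|𝓕 k]) ω ≤ (1 + u k) * f k ω - v k * g k ω + w k ω)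
    (hL : ∀ k ω, L k ω = f k ω / p (k - 1) - ∑ i ∈ range k, w i ω / p i)
    (hLinf : ∀ k ω, Linf k ω = fInf ω / p k - ∑ i ∈ range k, w i ω / p i)
    (hLinf_int : ∀ k, Integrable (Linf k) μ) (hfInf : ∀ᵐ ω ∂μ, ∀ k, fInf ω ≤ f (k + 1) ω)
    {γ : ℝ} (hγ : γ ≤ 1) (hLinf_dev : ∀ᵐ ω ∂μ, ∀ k,
      |Linf (k + 1) ω - (μ[Linf (k + 2)|𝓕 (k + 1)]) ω| ≤
        γ * (v (k + 1) / p (k + 1)) * g (k + 1) ω) :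
    ∀ᵐ ω ∂μ, Summable fun k => c (k + 1) * (φ (L (k + 1) ω - Linf (k + 1) ω) -
      φ ((μ[L (k + 2)|𝓕 (k + 1)]) ω - (μ[Linf (k + 2)|𝓕 (k + 1)]) ω)) := by
  have hL_int : ∀ k, Integrable (L k) μ := integrable_normalized hf_int hw_int hL
  have hD0 : ∀ k, 0 ≤ᵐ[μ] fun ω => L (k + 1) ω - Linf (k + 1) ω := fun k => by
    filter_upwards [hfInf] with ω hω
    exact normalized_sub_limit_nonneg hp_pos hp_mono hL hLinf (hf0 _ _) (hω k)
  have hD_super : ∀ k, μ[fun ω => L (k + 2) ω - Linf (k + 2) ω|𝓕 (k + 1)] ≤ᵐ[μ]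
      fun ω => L (k + 1) ω - Linf (k + 1) ω := fun k =>
    condExp_sub_le_of_le_of_abs_sub_le (hL_int _) (hLinf_int _)
      (condExp_normalized_succ_le hf_int hw_adapted hw_int hp_pos hp_succ hdescent hL k)
      (by filter_upwards [hLinf_dev] with ω hω using mul_assoc γ _ _ ▸ hω k) hγ
      (.of_forall fun ω => mul_nonneg (div_nonneg (hv _) (hp_pos _).le) (hg0 _ _))
  filter_upwards [ae_summable_mul_sub_comp_condExp_succ (fun k => 𝓕.le (k + 1)) hφ.1
      hφ.continuousOn hφ.monotoneOn hφ.2.1 hM (fun i j hij => hc (Nat.add_le_add_right hij 1))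
      (fun k => hc0 (k + 1)) (fun k => (hL_int _).sub (hLinf_int _)) hD0 hD_super,
    ae_all_iff.2 fun k => condExp_sub (hL_int (k + 2)) (hLinf_int (k + 2)) (𝓕 (k + 1))]
    with ω hω hsub
  exact hω.congr fun k => by rw [hsub k]; rfl

end

theorem gamma_phi_summable_general
    {H : Type*} [NormedAddCommGroup H] [InnerProductSpace ℝ H] [FiniteDimensional ℝ H]
    {Ω : Type*} {m0 : MeasurableSpace Ω} (μ : Measure Ω) [IsProbabilityMeasure μ]
    (𝓕 : Filtration ℕ m0)
    (F : H → ℝ)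
    -- Assumption 1
    (Fstar : ℝ) (hFstar : IsLeast (Set.range F) Fstar)
    -- Assumption 4
    (x : ℕ → Ω → H)
    (hFx_int : ∀ k, Integrable (fun ω => F (x k ω)) μ)
    (hgradx_int : ∀ k, Integrable (fun ω => ‖gradient F (x k ω)‖ ^ 2) μ)
    (u v s : ℕ → ℝ) (w : ℕ → Ω → ℝ)
    (hu : ∀ k, 0 ≤ u k) (hv : ∀ k, 0 ≤ v k)
    (hs : ∀ k, 0 ≤ s k)
    (hw_adapted : ∀ k, StronglyMeasurable[𝓕 k] (w k))
    (hw_int : ∀ k, Integrable (w k) μ)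
    (hdescent : ∀ k, ∀ᵐ ω ∂μ,
      (μ[fun ω' => F (x (k + 1) ω') - Fstar | 𝓕 k]) ω ≤
        (1 + u k) * (F (x k ω) - Fstar) - v k * ‖gradient F (x k ω)‖ ^ 2 + w k ω)
    -- the almost sure limit of `F (x k)`
    (Finf : Ω → ℝ)
    (hFinf : ∀ᵐ ω ∂μ, Tendsto (fun k => F (x k ω)) atTop (𝓝 (Finf ω)))
    -- auxiliary quantities
    (p : ℕ → ℝ) (hp : ∀ k, p k = ∏ i ∈ Finset.range (k + 1), (1 + u i))
    (L : ℕ → Ω → ℝ)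
    (hL : ∀ k ω, L k ω =
      (F (x k ω) - Fstar) / p (k - 1) - ∑ i ∈ Finset.range k, w i ω / p i)
    (Linf : ℕ → Ω → ℝ)
    (hLinf : ∀ k ω, Linf k ω =
      (Finf ω - Fstar) / p k - ∑ i ∈ Finset.range k, w i ω / p i)
    -- the event `Ξ_γ` has probability one for some `γ ∈ (0,1)`
    (γ : ℝ) (hγ : γ ∈ Set.Ioo (0:ℝ) 1)
    (Ξ : Set Ω)
    (hΞ : Ξ = {ω | ∀ k, 1 ≤ k →
      Finf ω < F (x k ω) ∧
      |Linf k ω - (μ[Linf (k + 1) | 𝓕 k]) ω| ≤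
        γ * (v k / p k) * ‖gradient F (x k ω)‖ ^ 2})
    (hΞ_prob : μ Ξ = 1)
    -- `(s k * p k / v k)` is non-increasing
    (hmono : Antitone fun k => s k * p k / v k)
    -- a bounded function `φ ∈ Φ_{+∞}`
    (φ : ℝ → ℝ) (hφ : IsPhiTop φ)
    (hφ_bdd : ∃ M : ℝ, ∀ s ∈ Set.Ici (0:ℝ), φ s ≤ M) :
    ∀ᵐ ω ∂μ, Summable fun k : ℕ =>
      s (k + 1) * p (k + 1) / v (k + 1) *
        (φ (L (k + 1) ω - Linf (k + 1) ω) -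
          φ ((μ[L (k + 2) | 𝓕 (k + 1)]) ω - (μ[Linf (k + 2) | 𝓕 (k + 1)]) ω)) := by
  obtain ⟨M, hM⟩ := hφ_bdd
  have hp_pos : ∀ k, 0 < p k := fun k => hp k ▸ zero_lt_one.trans_le (one_le_prod_one_add hu _)
  have hp_mono : Monotone p := fun i j hij => by
    simpa only [hp] using monotone_prod_range_one_add hu (Nat.succ_le_succ hij)
  have hp_succ : ∀ k, p (k + 1) = p k * (1 + u (k + 1)) := fun k => by rw [hp, hp, prod_range_succ]
  have hFinf_meas : AEMeasurable Finf μ :=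
    (aestronglyMeasurable_of_tendsto_ae _ (fun k => (hFx_int k).1) hFinf).aemeasurable
  have hLinf_meas := aemeasurable_limit_normalized (hFinf_meas.sub_const Fstar)
    (fun k => (hw_int k).aemeasurable) hLinf
  rw [hΞ] at hΞ_prob
  have hΞ_ae := ae_forall_imp_of_measure_eq_one (fun k _ =>
    (nullMeasurableSet_lt hFinf_meas (hFx_int k).aemeasurable).inter
      (nullMeasurableSet_le ((hLinf_meas k).sub integrable_condExp.aemeasurable).abs
        ((hgradx_int k).aemeasurable.const_mul _))) hΞ_prob
  -- the bound defining `Ξ` at `k = 1` is what makes `F∞`, hence every `Linf k`, integrable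
  have hLinf_int : ∀ k, Integrable (Linf k) μ :=
    integrable_limit_normalized hw_int hp_pos hLinf (j := 1) <|
      .of_abs_sub_le (hLinf_meas 1).aestronglyMeasurable integrable_condExp
        ((hgradx_int 1).const_mul _) (by filter_upwards [hΞ_ae] with ω h using (h 1 le_rfl).2)
  refine ae_summable_normalized_gap (f := fun k ω => F (x k ω) - Fstar)
    (g := fun k ω => ‖gradient F (x k ω)‖ ^ 2) (fInf := fun ω => Finf ω - Fstar)
    (c := fun k => s k * p k / v k) hφ hM hmono
    (fun k => div_nonneg (mul_nonneg (hs k) (hp_pos k).le) (hv k))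
    (fun k => (hFx_int k).sub (integrable_const _)) (fun k ω => sub_nonneg.2 (hFstar.2 ⟨_, rfl⟩))
    (fun k ω => sq_nonneg _) hw_adapted hw_int hv hp_pos hp_mono hp_succ hdescent hL hLinf
    hLinf_int ?_ hγ.2.le ?_
  · filter_upwards [hΞ_ae] with ω hω k using sub_le_sub_right (hω (k + 1) k.succ_pos).1.le _
  · filter_upwards [hΞ_ae] with ω hω k using (hω (k + 1) k.succ_pos).2

/-- Under Assumptions 1, 3 and 4, if `(s k p k / v k)` is non-increasing
and `P(Ξ_γ) = 1` for some `γ ∈ (0,1)`, then for any bounded `φ ∈ Φ_{+∞}` the series `Γ_φ`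
is almost surely finite (i.e. the non-negative series indexed by `k ≥ 1` is summable). -/
theorem gamma_phi_summable
    {H : Type*} [NormedAddCommGroup H] [InnerProductSpace ℝ H] [FiniteDimensional ℝ H]
    {Ω : Type*} {m0 : MeasurableSpace Ω} (μ : Measure Ω) [IsProbabilityMeasure μ]
    (𝓕 : Filtration ℕ m0)
    (F : H → ℝ)
    -- Assumption 1
    (hF_coercive : Tendsto F (Bornology.cobounded H) atTop)
    (hF_smooth : ContDiff ℝ 1 F)
    (Fstar : ℝ) (hFstar : IsLeast (Set.range F) Fstar)
    -- Assumption 3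
    (hKL : HasKLOn F {y : H | gradient F y = 0})
    (I : ℕ) (hI : 1 ≤ I) (C : Fin I → Set H)
    (hC_ne : ∀ i, (C i).Nonempty)
    (hC_compact : ∀ i, IsCompact (C i))
    (hC_disj : Pairwise (Function.onFun Disjoint C))
    (hzer : {y : H | gradient F y = 0} = ⋃ i, C i)
    -- Assumption 4
    (x : ℕ → Ω → H)
    (hFx_adapted : ∀ k, StronglyMeasurable[𝓕 k] (fun ω => F (x k ω)))
    (hFx_int : ∀ k, Integrable (fun ω => F (x k ω)) μ)
    (hgradx_adapted : ∀ k, StronglyMeasurable[𝓕 k] (fun ω => ‖gradient F (x k ω)‖ ^ 2))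
    (hgradx_int : ∀ k, Integrable (fun ω => ‖gradient F (x k ω)‖ ^ 2) μ)
    (u v r s t : ℕ → ℝ) (w : ℕ → Ω → ℝ)
    (hu : ∀ k, 0 ≤ u k) (hv : ∀ k, 0 ≤ v k) (hr : ∀ k, 0 ≤ r k)
    (hs : ∀ k, 0 ≤ s k) (ht : ∀ k, 0 ≤ t k)
    (hw_nonneg : ∀ k ω, 0 ≤ w k ω)
    (hw_adapted : ∀ k, StronglyMeasurable[𝓕 k] (w k))
    (hw_int : ∀ k, Integrable (w k) μ)
    (hu_sum : Summable u)
    (hv_inf : ∃ ε > (0:ℝ), ∀ k, ε ≤ v k)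
    (hr_sum : Summable r) (ht_sum : Summable t)
    (hw_sum : ∀ᵐ ω ∂μ, Summable fun k => w k ω)
    (hdescent : ∀ k, ∀ᵐ ω ∂μ,
      (μ[fun ω' => F (x (k + 1) ω') - Fstar | 𝓕 k]) ω ≤
        (1 + u k) * (F (x k ω) - Fstar) - v k * ‖gradient F (x k ω)‖ ^ 2 + w k ω)
    (hstep : ∀ k, ∀ᵐ ω ∂μ,
      (μ[fun ω' => ‖x (k + 1) ω' - x k ω'‖ | 𝓕 k]) ω ≤
        r k * Real.sqrt (F (x k ω) - Fstar) + s k * ‖gradient F (x k ω)‖ + t k)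
    -- the almost sure limit of `F (x k)`
    (Finf : Ω → ℝ)
    (hFinf : ∀ᵐ ω ∂μ, Tendsto (fun k => F (x k ω)) atTop (𝓝 (Finf ω)))
    -- auxiliary quantities
    (p : ℕ → ℝ) (hp : ∀ k, p k = ∏ i ∈ Finset.range (k + 1), (1 + u i))
    (L : ℕ → Ω → ℝ)
    (hL : ∀ k ω, L k ω =
      (F (x k ω) - Fstar) / p (k - 1) - ∑ i ∈ Finset.range k, w i ω / p i)
    (Linf : ℕ → Ω → ℝ)
    (hLinf : ∀ k ω, Linf k ω =
      (Finf ω - Fstar) / p k - ∑ i ∈ Finset.range k, w i ω / p i)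
    -- the event `Ξ_γ` has probability one for some `γ ∈ (0,1)`
    (γ : ℝ) (hγ : γ ∈ Set.Ioo (0:ℝ) 1)
    (Ξ : Set Ω)
    (hΞ : Ξ = {ω | ∀ k, 1 ≤ k →
      Finf ω < F (x k ω) ∧
      |Linf k ω - (μ[Linf (k + 1) | 𝓕 k]) ω| ≤
        γ * (v k / p k) * ‖gradient F (x k ω)‖ ^ 2})
    (hΞ_prob : μ Ξ = 1)
    -- `(s k * p k / v k)` is non-increasing
    (hmono : Antitone fun k => s k * p k / v k)
    -- a bounded function `φ ∈ Φ_{+∞}`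
    (φ : ℝ → ℝ) (hφ : IsPhiTop φ)
    (hφ_bdd : ∃ M : ℝ, ∀ s ∈ Set.Ici (0:ℝ), φ s ≤ M) :
    ∀ᵐ ω ∂μ, Summable fun k : ℕ =>
      s (k + 1) * p (k + 1) / v (k + 1) *
        (φ (L (k + 1) ω - Linf (k + 1) ω) -
          φ ((μ[L (k + 2) | 𝓕 (k + 1)]) ω - (μ[Linf (k + 2) | 𝓕 (k + 1)]) ω)) :=
  gamma_phi_summable_general μ 𝓕 F Fstar hFstar x hFx_int hgradx_int u v s w hu hv hs hw_adapted
    hw_int hdescent Finf hFinf p hp L hL Linf hLinf γ hγ Ξ hΞ hΞ_prob hmono φ hφ hφ_bdd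
end

section
/- Let F : H → ℝ be coercive and β-Lipschitz differentiable (β > 0) on a finite-dimensional real Hilbert space H, with minimal value F*. Let (x_k) be generated by the preconditioned stochastic gradient scheme x_{k+1} = x_k − α_k U_k f_k with respect to the canonical filtration 𝓕_k = σ(x_0, …, x_k), where the U_k are 𝓕_k-measurable self-adjoint linear operators satisfying μ_k ‖x‖² ≤ ⟨x, U_k x⟩ ≤ ν_k ‖x‖² a.s. for every x ∈ H, and the gradient estimates satisfy E[‖f_k‖² | 𝓕_k] ≤ a_k (F(x_k) − F*) + b_k ‖∇F(x_k)‖² + c_k a.s. Assume inf_k μ_k > 0, ∑_k α_k ν_k a_k^{1/2} < ∞, ∑_k α_k ν_k c_k^{1/2} < ∞, and additionally that (f_k) is conditionally unbiased (E[f_k | 𝓕_k] = ∇F(x_k) a.s. for every k) and inf_k α_k (μ_k − α_k β ν_k² b_k / 2) > 0. Then (x_k) satisfies Assumption 4: there exist non-negative deterministic sequences (u_k), (v_k), (r_k), (s_k), (t_k) and a non-negative 𝓕_k-adapted integrable process (w_k) with ∑ u_k < ∞, inf_k v_k > 0, ∑ r_k < ∞, ∑ t_k < ∞, ∑ w_k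 < ∞ a.s., such that for all k: E[F(x_{k+1}) − F* | 𝓕_k] ≤ (1 + u_k)(F(x_k) − F*) − v_k ‖∇F(x_k)‖² + w_k a.s. and E[‖x_{k+1} − x_k‖ | 𝓕_k] ≤ r_k √(F(x_k) − F*) + s_k ‖∇F(x_k)‖ + t_k a.s. -/
/-
The descent lemma for the `β`-smooth `F` turns one step `x_{k+1} = x_k - α_k U_k f_k` into
`F(x_{k+1}) ≤ F(x_k) - α_k ⟪U_k ∇F(x_k), f_k⟫ + (β/2) α_k² ν_k² ‖f_k‖²`, using `‖U_k‖ ≤ ν_k`.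
Conditioning on `𝓕_k`, the factor `U_k ∇F(x_k)` is pulled out and unbiasedness turns the cross
term into `⟪U_k ∇F(x_k), ∇F(x_k)⟫ ≥ μ_k ‖∇F(x_k)‖²`, while the second-moment bound controls the
last term. This gives the first inequality with `u_k, w_k` proportional to `α_k² ν_k² a_k` and
`α_k² ν_k² c_k`, which are summable as squares of the summable `α_k ν_k √a_k`, `α_k ν_k √c_k`.
The second inequality follows from `‖x_{k+1} - x_k‖ ≤ α_k ν_k ‖f_k‖` and the conditional Jensen
inequality `E[‖f_k‖ | 𝓕_k]² ≤ E[‖f_k‖² | 𝓕_k]`.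
-/

open MeasureTheory Filter Topology RealInnerProductSpace ProbabilityTheory
open scoped NNReal

theorem norm_smul_apply_le_of_opNorm_le {E : Type*} [NormedAddCommGroup E] [NormedSpace ℝ E]
    {A : E →L[ℝ] E} {ν α : ℝ} (hA : ‖A‖ ≤ ν) (hα : 0 ≤ α) (v : E) :
    ‖α • A v‖ ≤ α * ν * ‖v‖ := by
  rw [norm_smul, Real.norm_of_nonneg hα, mul_assoc]
  exact mul_le_mul_of_nonneg_left (A.le_of_opNorm_le hA v) hα

theorem ContinuousLinearMap.opNorm_le_of_inner_map_self_le {H : Type*} [NormedAddCommGroup H]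
    [InnerProductSpace ℝ H] {T : H →L[ℝ] H} (hT : T.IsSymmetric) {ν : ℝ} (hν : 0 ≤ ν)
    (hpos : ∀ z, 0 ≤ ⟪z, T z⟫) (hle : ∀ z, ⟪z, T z⟫ ≤ ν * ‖z‖ ^ 2) : ‖T‖ ≤ ν := by
  rw [T.norm_eq_iSup_rayleighQuotient hT]
  refine ciSup_le fun z => ?_
  rw [rayleighQuotient, reApplyInnerSelf_apply, RCLike.re_to_real, real_inner_comm,
    abs_div, abs_sq, abs_of_nonneg (hpos z)]
  rcases eq_or_ne z 0 with rfl | hz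
  · simpa using hν
  · exact div_le_of_le_mul₀ (by positivity) hν (hle z)

theorem Summable.sq_of_nonneg {g : ℕ → ℝ} (hg : Summable g) (hg0 : ∀ n, 0 ≤ g n) :
    Summable fun n => g n ^ 2 := by
  refine hg.of_norm_bounded_eventually_nat ?_
  filter_upwards [hg.tendsto_atTop_zero.eventually_le_const one_pos] with n hn
  rw [Real.norm_of_nonneg (sq_nonneg _), sq]
  exact mul_le_of_le_one_left (hg0 n) hn

theorem summable_mul_sq_mul_of_summable_mul_sqrt (c : ℝ) {p d : ℕ → ℝ} (hp : ∀ n, 0 ≤ p n)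
    (hd : ∀ n, 0 ≤ d n) (hs : Summable fun n => p n * √(d n)) :
    Summable fun n => c * p n ^ 2 * d n := by
  refine ((hs.sq_of_nonneg fun n => mul_nonneg (hp n) (Real.sqrt_nonneg _)).mul_left c).congr
    fun n => ?_
  rw [mul_pow, Real.sq_sqrt (hd n), mul_assoc]

theorem sqrt_mul_add_mul_sq_add_le {a b c A r : ℝ} (ha : 0 ≤ a) (hb : 0 ≤ b) (hc : 0 ≤ c)
    (hA : 0 ≤ A) (hr : 0 ≤ r) : √(a * A + b * r ^ 2 + c) ≤ √a * √A + √b * r + √c := by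
  rw [Real.sqrt_le_left (by positivity)]
  have hsa := Real.sq_sqrt ha
  have hsb := Real.sq_sqrt hb
  have hsc := Real.sq_sqrt hc
  have hsA := Real.sq_sqrt hA
  have : 0 ≤ √a * √A := by positivity
  have : 0 ≤ √b * r := by positivity
  have : 0 ≤ √c := Real.sqrt_nonneg c
  nlinarith

section Smooth

variable {H : Type*} [NormedAddCommGroup H] [InnerProductSpace ℝ H] [CompleteSpace H]
  {F : H → ℝ} {K : ℝ≥0}

theorem descent_lemma (hF : Differentiable ℝ F) (hK : LipschitzWith K (gradient F)) (x y : H) :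
    F y ≤ F x + ⟪gradient F x, y - x⟫ + K / 2 * ‖y - x‖ ^ 2 := by
  set d := y - x
  have hline : ∀ t : ℝ, HasDerivAt (fun t : ℝ => F (x + t • d)) ⟪gradient F (x + t • d), d⟫ t := by
    intro t
    have hFd := hasGradientAt_iff_hasFDerivAt.mp (hF (x + t • d)).hasGradientAt
    have h := hFd.comp_hasDerivAt t (((hasDerivAt_id t).smul_const d).const_add x)
    simp only [Function.comp_def, InnerProductSpace.toDual_apply_apply, one_smul] at h
    exact h
  -- `ψ` is antitone on `[0, ∞)` because the slope of `F` along the segment grows at rate `≤ K ‖d‖²`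
  set ψ : ℝ → ℝ := fun t => F (x + t • d) - t * ⟪gradient F x, d⟫ - K / 2 * t ^ 2 * ‖d‖ ^ 2
  have hψ : ∀ t : ℝ, HasDerivAt ψ
      (⟪gradient F (x + t • d), d⟫ - ⟪gradient F x, d⟫ - K * t * ‖d‖ ^ 2) t := by
    intro t
    have hquad := ((hasDerivAt_pow 2 t).const_mul ((K : ℝ) / 2)).mul_const (‖d‖ ^ 2)
    refine (((hline t).sub ((hasDerivAt_id t).mul_const _)).sub hquad).congr_deriv ?_
    push_cast
    ring
  have hslope : ∀ t, 0 ≤ t → ⟪gradient F (x + t • d) - gradient F x, d⟫ ≤ K * t * ‖d‖ ^ 2 := by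
    intro t ht
    calc ⟪gradient F (x + t • d) - gradient F x, d⟫
        ≤ ‖gradient F (x + t • d) - gradient F x‖ * ‖d‖ := real_inner_le_norm _ _
      _ ≤ K * ‖t • d‖ * ‖d‖ := by
          gcongr
          simpa [dist_eq_norm] using hK.dist_le_mul (x + t • d) x
      _ = K * t * ‖d‖ ^ 2 := by rw [norm_smul, Real.norm_of_nonneg ht]; ring
  have hanti : AntitoneOn ψ (Set.Ici 0) := by
    refine antitoneOn_of_hasDerivWithinAt_nonpos (convex_Ici 0)
      (fun t _ => (hψ t).continuousAt.continuousWithinAt) (fun t _ => (hψ t).hasDerivWithinAt)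
      fun t ht => ?_
    rw [interior_Ici] at ht
    have := hslope t (le_of_lt ht)
    rw [inner_sub_left] at this
    linarith
  have h01 := hanti Set.self_mem_Ici (Set.mem_Ici.mpr zero_le_one) zero_le_one
  simp only [ψ, d, one_smul, zero_smul, add_zero, add_sub_cancel] at h01
  linarith

variable {Fmin : ℝ}

theorem norm_gradient_sq_le (hF : Differentiable ℝ F) (hK : LipschitzWith K (gradient F))
    (hKpos : 0 < K) (hFmin : ∀ z, Fmin ≤ F z) (z : H) :
    ‖gradient F z‖ ^ 2 ≤ 2 * K * (F z - Fmin) := by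
  have hK0 : (0 : ℝ) < K := hKpos
  -- a gradient step of length `1 / K` decreases `F` by at least `‖∇F z‖² / (2K)`
  have h := descent_lemma hF hK z (z - (K : ℝ)⁻¹ • gradient F z)
  rw [sub_sub_cancel_left, inner_neg_right, norm_neg, real_inner_smul_right,
    real_inner_self_eq_norm_sq, norm_smul, Real.norm_of_nonneg (inv_nonneg.2 hK0.le)] at h
  have hmin := hFmin (z - (K : ℝ)⁻¹ • gradient F z)
  have e : (K : ℝ) / 2 * ((K : ℝ)⁻¹ * ‖gradient F z‖) ^ 2 =
      (K : ℝ)⁻¹ * ‖gradient F z‖ ^ 2 - (2 * K : ℝ)⁻¹ * ‖gradient F z‖ ^ 2 := by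
    field_simp; ring
  have : (2 * K : ℝ)⁻¹ * ‖gradient F z‖ ^ 2 ≤ F z - Fmin := by linarith
  rwa [inv_mul_le_iff₀ (by positivity)] at this

theorem sub_le_two_mul_sub_add_sq (hF : Differentiable ℝ F) (hK : LipschitzWith K (gradient F))
    (hKpos : 0 < K) (hFmin : ∀ z, Fmin ≤ F z) (x y : H) :
    F x - Fmin ≤ 2 * (F y - Fmin) + K * ‖x - y‖ ^ 2 := by
  have hK0 : (0 : ℝ) < K := hKpos
  have hdesc := descent_lemma hF hK y x
  have hgrad := norm_gradient_sq_le hF hK hKpos hFmin y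
  have hinner := real_inner_le_norm (gradient F y) (x - y)
  have hamgm : ‖gradient F y‖ * ‖x - y‖ * (2 * K) ≤ ‖gradient F y‖ ^ 2 + K ^ 2 * ‖x - y‖ ^ 2 := by
    nlinarith [sq_nonneg (‖gradient F y‖ - K * ‖x - y‖)]
  nlinarith

theorem preconditioned_descent_lemma (hF : Differentiable ℝ F) (hK : LipschitzWith K (gradient F))
    {A : H →L[ℝ] H} (hA : A.IsSymmetric) {ν α : ℝ} (hAν : ‖A‖ ≤ ν) (hα : 0 ≤ α) (x v : H) :
    F (x - α • A v) ≤ F x - α * ⟪A (gradient F x), v⟫ + K / 2 * (α * ν) ^ 2 * ‖v‖ ^ 2 := by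
  have h := descent_lemma hF hK x (x - α • A v)
  rw [sub_sub_cancel_left, inner_neg_right, norm_neg, real_inner_smul_right,
    ← hA.apply_clm, norm_smul, Real.norm_of_nonneg hα] at h
  have : (α * ‖A v‖) ^ 2 ≤ (α * ν) ^ 2 * ‖v‖ ^ 2 := by
    rw [← mul_pow, ← Real.norm_of_nonneg hα, ← norm_smul, Real.norm_of_nonneg hα]
    exact pow_le_pow_left₀ (norm_nonneg _) (norm_smul_apply_le_of_opNorm_le hAν hα v) 2
  have hK0 : (0 : ℝ) ≤ K / 2 := by positivity
  nlinarith

end Smooth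

section CondExp

variable {Ω : Type*} {m m0 : MeasurableSpace Ω} {μ : Measure Ω}

theorem condExp_inner_of_stronglyMeasurable_left {H : Type*} [NormedAddCommGroup H]
    [InnerProductSpace ℝ H] [CompleteSpace H] {g f : Ω → H} (hg : StronglyMeasurable[m] g)
    (hgf : Integrable (fun ω => ⟪g ω, f ω⟫) μ) (hf : Integrable f μ) :
    μ[fun ω => ⟪g ω, f ω⟫ | m] =ᵐ[μ] fun ω => ⟪g ω, (μ[f | m]) ω⟫ :=
  condExp_bilin_of_stronglyMeasurable_left (innerSL ℝ) hg hgf hf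

variable [IsFiniteMeasure μ]

theorem sq_condExp_le_condExp_sq (hm : m ≤ m0) {X : Ω → ℝ} (hX : MemLp X 2 μ) :
    (μ[X | m]) ^ 2 ≤ᵐ[μ] μ[X ^ 2 | m] := by
  have hvar : 0 ≤ᵐ[μ] Var[X; μ | m] :=
    condExp_nonneg (ae_of_all _ fun ω => sq_nonneg _)
  filter_upwards [hvar, condVar_ae_eq_condExp_sq_sub_sq_condExp hm hX] with ω h0 heq
  simp only [heq, Pi.sub_apply, Pi.zero_apply, sub_nonneg] at h0
  exact h0

theorem condExp_le_sqrt_condExp_sq (hm : m ≤ m0) {X : Ω → ℝ} (hX : MemLp X 2 μ) :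
    ∀ᵐ ω ∂μ, (μ[X | m]) ω ≤ √((μ[X ^ 2 | m]) ω) := by
  filter_upwards [sq_condExp_le_condExp_sq hm hX] with ω h
  exact Real.le_sqrt_of_sq_le h

theorem condExp_norm_le_mul_sqrt_condExp_sq (hm : m ≤ m0) {E : Type*} [NormedAddCommGroup E]
    {Δ : Ω → E} {Y : Ω → ℝ} {c : ℝ} (hΔ : AEStronglyMeasurable Δ μ) (hY : MemLp Y 2 μ) (hc : 0 ≤ c)
    (hΔY : ∀ᵐ ω ∂μ, ‖Δ ω‖ ≤ c * Y ω) :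
    ∀ᵐ ω ∂μ, (μ[fun ω => ‖Δ ω‖ | m]) ω ≤ c * √((μ[Y ^ 2 | m]) ω) := by
  have hcY : Integrable (c • Y) μ := (hY.integrable one_le_two).smul c
  have hΔint : Integrable (fun ω => ‖Δ ω‖) μ :=
    hcY.mono' hΔ.norm (hΔY.mono fun ω h => by rwa [norm_norm])
  filter_upwards [condExp_mono (m := m) hΔint hcY hΔY, condExp_smul (m := m) c Y,
    condExp_le_sqrt_condExp_sq hm hY] with ω hmono hsmul hsqrt
  calc (μ[fun ω => ‖Δ ω‖ | m]) ω ≤ (μ[c • Y | m]) ω := hmono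
    _ = c * (μ[Y | m]) ω := hsmul
    _ ≤ c * √((μ[Y ^ 2 | m]) ω) := by gcongr

end CondExp

section PreconditionedStep

variable {H : Type*} [NormedAddCommGroup H] [InnerProductSpace ℝ H] [CompleteSpace H]
  {Ω : Type*} {m m0 : MeasurableSpace Ω} {μ : Measure Ω}
  {F : H → ℝ} {K : ℝ≥0} {Fmin : ℝ} {X g : Ω → H} {A : Ω → H →L[ℝ] H} {α ν μ' : ℝ}

theorem integrable_sub_of_integrable_preconditioned_step (hF : Differentiable ℝ F)
    (hK : LipschitzWith K (gradient F)) (hKpos : 0 < K) (hFmin : ∀ z, Fmin ≤ F z)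
    (hX : AEStronglyMeasurable X μ) (hA_norm : ∀ᵐ ω ∂μ, ‖A ω‖ ≤ ν) (hα : 0 ≤ α)
    (hg2 : Integrable (fun ω => ‖g ω‖ ^ 2) μ)
    (hint : Integrable (fun ω => F (X ω - α • A ω (g ω)) - Fmin) μ) :
    Integrable (fun ω => F (X ω) - Fmin) μ := by
  refine ((hint.const_mul 2).add (hg2.const_mul (K * (α * ν) ^ 2))).mono'
    ((hF.continuous.comp_aestronglyMeasurable hX).sub aestronglyMeasurable_const) ?_
  filter_upwards [hA_norm] with ω hω
  have h := sub_le_two_mul_sub_add_sq hF hK hKpos hFmin (X ω) (X ω - α • A ω (g ω))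
  rw [sub_sub_cancel] at h
  have : ‖α • A ω (g ω)‖ ^ 2 ≤ (α * ν) ^ 2 * ‖g ω‖ ^ 2 := by
    rw [← mul_pow]; exact pow_le_pow_left₀ (norm_nonneg _) (norm_smul_apply_le_of_opNorm_le hω hα _) 2
  rw [Real.norm_of_nonneg (sub_nonneg.2 (hFmin _))]
  have hK0 : (0 : ℝ) ≤ K := K.2
  simp only [Pi.add_apply]
  nlinarith

theorem integrable_inner_apply_gradient (hF : Differentiable ℝ F)
    (hK : LipschitzWith K (gradient F)) (hKpos : 0 < K) (hFmin : ∀ z, Fmin ≤ F z)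
    (hX : AEStronglyMeasurable X μ) (hA : AEStronglyMeasurable A μ)
    (hA_norm : ∀ᵐ ω ∂μ, ‖A ω‖ ≤ ν) (hg : Integrable g μ)
    (hg2 : Integrable (fun ω => ‖g ω‖ ^ 2) μ) (hFX : Integrable (fun ω => F (X ω) - Fmin) μ) :
    Integrable (fun ω => ⟪A ω (gradient F (X ω)), g ω⟫) μ := by
  have hgradX : AEStronglyMeasurable (fun ω => gradient F (X ω)) μ :=
    hK.continuous.comp_aestronglyMeasurable hX
  have hN : Integrable (fun ω => ‖gradient F (X ω)‖ ^ 2) μ :=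
    (hFX.const_mul (2 * K)).mono' (hgradX.norm.pow 2) (ae_of_all _ fun ω => by
      rw [Real.norm_of_nonneg (sq_nonneg _)]
      exact norm_gradient_sq_le hF hK hKpos hFmin _)
  refine ((hN.add hg2).const_mul (ν / 2)).mono'
    ((isBoundedBilinearMap_apply.continuous.comp_aestronglyMeasurable₂ hA hgradX).inner hg.1) ?_
  filter_upwards [hA_norm] with ω hω
  have hν : 0 ≤ ν := (norm_nonneg _).trans hω
  have h1 : ‖A ω (gradient F (X ω))‖ ≤ ν * ‖gradient F (X ω)‖ := (A ω).le_of_opNorm_le hω _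
  have h2 := abs_real_inner_le_norm (A ω (gradient F (X ω))) (g ω)
  rw [Real.norm_eq_abs]
  simp only [Pi.add_apply]
  nlinarith [mul_le_mul_of_nonneg_right h1 (norm_nonneg (g ω)),
    mul_nonneg hν (sq_nonneg (‖gradient F (X ω)‖ - ‖g ω‖))]

variable [IsFiniteMeasure μ]

theorem ae_condExp_preconditioned_step_le_of_integrable (hm : m ≤ m0) (hF : Differentiable ℝ F)
    (hK : LipschitzWith K (gradient F)) (hKpos : 0 < K) (hFmin : ∀ z, Fmin ≤ F z)
    (hX : StronglyMeasurable[m] X) (hA : StronglyMeasurable[m] A)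
    (hA_symm : ∀ ω, (A ω : H →ₗ[ℝ] H).IsSymmetric) (hA_norm : ∀ᵐ ω ∂μ, ‖A ω‖ ≤ ν)
    (hA_coercive : ∀ᵐ ω ∂μ, ∀ z, μ' * ‖z‖ ^ 2 ≤ ⟪z, A ω z⟫) (hα : 0 ≤ α) (hg : Integrable g μ)
    (hg2 : Integrable (fun ω => ‖g ω‖ ^ 2) μ)
    (hunbiased : μ[g | m] =ᵐ[μ] fun ω => gradient F (X ω))
    (hint : Integrable (fun ω => F (X ω - α • A ω (g ω)) - Fmin) μ) :
    ∀ᵐ ω ∂μ, (μ[fun ω => F (X ω - α • A ω (g ω)) - Fmin | m]) ω ≤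
      F (X ω) - Fmin - α * μ' * ‖gradient F (X ω)‖ ^ 2 +
        K / 2 * (α * ν) ^ 2 * (μ[fun ω => ‖g ω‖ ^ 2 | m]) ω := by
  set C : ℝ := K / 2 * (α * ν) ^ 2
  set G1 : Ω → ℝ := fun ω => F (X ω) - Fmin
  set G2 : Ω → ℝ := fun ω => ⟪A ω (gradient F (X ω)), g ω⟫
  set G3 : Ω → ℝ := fun ω => ‖g ω‖ ^ 2
  have hG1m : StronglyMeasurable[m] G1 :=
    (hF.continuous.comp_stronglyMeasurable hX).sub stronglyMeasurable_const
  have hAgradm : StronglyMeasurable[m] fun ω => A ω (gradient F (X ω)) :=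
    isBoundedBilinearMap_apply.continuous.comp_stronglyMeasurable
      (hA.prodMk (hK.continuous.comp_stronglyMeasurable hX))
  have hG1 : Integrable G1 μ := integrable_sub_of_integrable_preconditioned_step hF hK hKpos
    hFmin (hX.mono hm).aestronglyMeasurable hA_norm hα hg2 hint
  have hG2 : Integrable G2 μ := integrable_inner_apply_gradient hF hK hKpos hFmin
    (hX.mono hm).aestronglyMeasurable (hA.mono hm).aestronglyMeasurable hA_norm hg hg2 hG1
  have hpt : ∀ᵐ ω ∂μ, F (X ω - α • A ω (g ω)) - Fmin ≤ (G1 - α • G2 + C • G3) ω := by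
    filter_upwards [hA_norm] with ω hω
    have := preconditioned_descent_lemma hF hK (hA_symm ω) hω hα (X ω) (g ω)
    simp only [Pi.add_apply, Pi.sub_apply, Pi.smul_apply, smul_eq_mul, G1, G2, G3, C]
    linarith
  -- pulling out the `m`-measurable factor leaves `⟪A ∇F(X), E[g | m]⟫ = ⟪A ∇F(X), ∇F(X)⟫`
  have hinner : ∀ᵐ ω ∂μ, μ' * ‖gradient F (X ω)‖ ^ 2 ≤ (μ[G2 | m]) ω := by
    filter_upwards [condExp_inner_of_stronglyMeasurable_left hAgradm hG2 hg, hunbiased,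
      hA_coercive] with ω hpull hω hcoer
    rw [hpull, hω, real_inner_comm]
    exact hcoer _
  have hG1G2 : Integrable (G1 - α • G2) μ := hG1.sub (hG2.smul α)
  filter_upwards [condExp_mono (m := m) hint (hG1G2.add (hg2.smul C)) hpt,
    condExp_add (m := m) hG1G2 (hg2.smul C), condExp_sub (m := m) hG1 (hG2.smul α),
    condExp_smul (m := m) α G2, condExp_smul (m := m) C G3, hinner]
    with ω hmono hadd hsub hαG2 hCG3 hω
  rw [hadd, Pi.add_apply, hsub, Pi.sub_apply, hαG2, hCG3,
    condExp_of_stronglyMeasurable hm hG1m hG1] at hmono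
  simp only [Pi.smul_apply, smul_eq_mul] at hmono
  nlinarith

theorem ae_condExp_preconditioned_step_le (hm : m ≤ m0) (hF : Differentiable ℝ F)
    (hK : LipschitzWith K (gradient F)) (hKpos : 0 < K) (hFmin : ∀ z, Fmin ≤ F z)
    (hX : StronglyMeasurable[m] X) (hA : StronglyMeasurable[m] A)
    (hA_symm : ∀ ω, (A ω : H →ₗ[ℝ] H).IsSymmetric) (hA_norm : ∀ᵐ ω ∂μ, ‖A ω‖ ≤ ν)
    (hA_coercive : ∀ᵐ ω ∂μ, ∀ z, μ' * ‖z‖ ^ 2 ≤ ⟪z, A ω z⟫) (hα : 0 ≤ α) (hg : Integrable g μ)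
    (hg2 : Integrable (fun ω => ‖g ω‖ ^ 2) μ)
    (hunbiased : μ[g | m] =ᵐ[μ] fun ω => gradient F (X ω)) {a b c v : ℝ}
    (hmoment : ∀ᵐ ω ∂μ, (μ[fun ω => ‖g ω‖ ^ 2 | m]) ω ≤
      a * (F (X ω) - Fmin) + b * ‖gradient F (X ω)‖ ^ 2 + c)
    (ha : 0 ≤ a) (hc : 0 ≤ c) (hv_step : v ≤ α * μ' - K / 2 * (α * ν) ^ 2 * b)
    (hv_K : v ≤ 1 / (2 * K)) :
    ∀ᵐ ω ∂μ, (μ[fun ω => F (X ω - α • A ω (g ω)) - Fmin | m]) ω ≤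
      (1 + K / 2 * (α * ν) ^ 2 * a) * (F (X ω) - Fmin) - v * ‖gradient F (X ω)‖ ^ 2 +
        K / 2 * (α * ν) ^ 2 * c := by
  have hC : (0 : ℝ) ≤ K / 2 * (α * ν) ^ 2 := by positivity
  by_cases hint : Integrable (fun ω => F (X ω - α • A ω (g ω)) - Fmin) μ
  · filter_upwards [ae_condExp_preconditioned_step_le_of_integrable hm hF hK hKpos hFmin hX hA
      hA_symm hA_norm hA_coercive hα hg hg2 hunbiased hint, hmoment] with ω hstep hω
    have hN := sq_nonneg ‖gradient F (X ω)‖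
    nlinarith [mul_le_mul_of_nonneg_left hω hC, mul_le_mul_of_nonneg_right hv_step hN]
  · -- the conditional expectation is `0` by convention; `v ≤ 1 / (2K)` keeps the bound nonnegative
    refine ae_of_all _ fun ω => ?_
    rw [condExp_of_not_integrable hint, Pi.zero_apply]
    have hK0 : (0 : ℝ) < K := hKpos
    have hgrad := norm_gradient_sq_le hF hK hKpos hFmin (X ω)
    have hFX := sub_nonneg.2 (hFmin (X ω))
    have hvN : v * ‖gradient F (X ω)‖ ^ 2 ≤ F (X ω) - Fmin :=
      calc v * ‖gradient F (X ω)‖ ^ 2 ≤ 1 / (2 * K) * (2 * K * (F (X ω) - Fmin)) := by gcongr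
        _ = F (X ω) - Fmin := by field_simp
    nlinarith [mul_nonneg (mul_nonneg hC ha) hFX, mul_nonneg hC hc]

theorem ae_condExp_norm_preconditioned_step_le (hm : m ≤ m0) (hFmin : ∀ z, Fmin ≤ F z)
    (hA : AEStronglyMeasurable A μ) (hA_norm : ∀ᵐ ω ∂μ, ‖A ω‖ ≤ ν) (hα : 0 ≤ α) (hν : 0 ≤ ν)
    (hg : Integrable g μ) (hg2 : Integrable (fun ω => ‖g ω‖ ^ 2) μ) {a b c : ℝ}
    (hmoment : ∀ᵐ ω ∂μ, (μ[fun ω => ‖g ω‖ ^ 2 | m]) ω ≤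
      a * (F (X ω) - Fmin) + b * ‖gradient F (X ω)‖ ^ 2 + c)
    (ha : 0 ≤ a) (hb : 0 ≤ b) (hc : 0 ≤ c) :
    ∀ᵐ ω ∂μ, (μ[fun ω => ‖X ω - α • A ω (g ω) - X ω‖ | m]) ω ≤
      α * ν * √a * √(F (X ω) - Fmin) + α * ν * √b * ‖gradient F (X ω)‖ + α * ν * √c := by
  have hAg : AEStronglyMeasurable (fun ω => X ω - α • A ω (g ω) - X ω) μ := by
    simp only [sub_sub_cancel_left]
    exact ((isBoundedBilinearMap_apply.continuous.comp_aestronglyMeasurable₂ hA hg.1).const_smul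
      α).neg
  have hΔ : ∀ᵐ ω ∂μ, ‖X ω - α • A ω (g ω) - X ω‖ ≤ α * ν * ‖g ω‖ := by
    filter_upwards [hA_norm] with ω hω
    rw [sub_sub_cancel_left, norm_neg]
    exact norm_smul_apply_le_of_opNorm_le hω hα _
  filter_upwards [condExp_norm_le_mul_sqrt_condExp_sq hm hAg
    ((memLp_two_iff_integrable_sq hg.1.norm).2 hg2) (mul_nonneg hα hν) hΔ, hmoment]
    with ω hcond hω
  have hsplit := sqrt_mul_add_mul_sq_add_le ha hb hc (sub_nonneg.2 (hFmin (X ω)))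
    (norm_nonneg (gradient F (X ω)))
  calc _ ≤ α * ν * √((μ[fun ω => ‖g ω‖ ^ 2 | m]) ω) := hcond
    _ ≤ α * ν * (√a * √(F (X ω) - Fmin) + √b * ‖gradient F (X ω)‖ + √c) :=
        mul_le_mul_of_nonneg_left ((Real.sqrt_le_sqrt hω).trans hsplit) (mul_nonneg hα hν)
    _ = _ := by ring

end PreconditionedStep

theorem sgd_unbiased_satisfies_assumption4_general
    {H : Type*} [NormedAddCommGroup H] [InnerProductSpace ℝ H] [FiniteDimensional ℝ H]
    [MeasurableSpace H] [BorelSpace H]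
    {Ω : Type*} {m0 : MeasurableSpace Ω} (μ : Measure Ω) [IsProbabilityMeasure μ]
    (F : H → ℝ)
    (β : ℝ) (hβ : 0 < β)
    (hF_diff : Differentiable ℝ F)
    (hF_lip : LipschitzWith (Real.toNNReal β) (gradient F))
    (Fstar : ℝ) (hFstar : IsLeast (Set.range F) Fstar)
    (x : ℕ → Ω → H) (hx_meas : ∀ k, StronglyMeasurable (x k))
    (f : ℕ → Ω → H) (hf_int : ∀ k, Integrable (f k) μ)
    (hf_sq_int : ∀ k, Integrable (fun ω => ‖f k ω‖ ^ 2) μ)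
    (U : ℕ → Ω → H →L[ℝ] H)
    (α a b c μ' ν : ℕ → ℝ)
    (hα : ∀ k, 0 < α k) (ha : ∀ k, 0 ≤ a k) (hb : ∀ k, 0 ≤ b k) (hc : ∀ k, 0 ≤ c k)
    (hμ'_pos : ∀ k, 0 < μ' k) (hν_pos : ∀ k, 0 < ν k)
    -- the preconditioned stochastic gradient scheme
    (hscheme : ∀ k ω, x (k + 1) ω = x k ω - α k • (U k ω) (f k ω))
    -- `U k` is `𝓕 k`-measurable and self-adjoint, with a.s. uniformly bounded spectrum
    (hU_adapted : ∀ k, StronglyMeasurable[(Filtration.natural x hx_meas) k] (U k))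
    (hU_selfadj : ∀ k ω, ∀ y z : H, ⟪(U k ω) y, z⟫ = ⟪y, (U k ω) z⟫)
    (hU_spectrum : ∀ k, ∀ᵐ ω ∂μ, ∀ z : H,
      μ' k * ‖z‖ ^ 2 ≤ ⟪z, (U k ω) z⟫ ∧ ⟪z, (U k ω) z⟫ ≤ ν k * ‖z‖ ^ 2)
    -- conditional second moment bound on the gradient estimates
    (hmoment : ∀ k, ∀ᵐ ω ∂μ,
      (μ[fun ω' => ‖f k ω'‖ ^ 2 | (Filtration.natural x hx_meas) k]) ω ≤
        a k * (F (x k ω) - Fstar) + b k * ‖gradient F (x k ω)‖ ^ 2 + c k)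
    -- conditions (5.9)
    (hsum_a : Summable fun k => α k * ν k * Real.sqrt (a k))
    (hsum_c : Summable fun k => α k * ν k * Real.sqrt (c k))
    -- case (i): conditionally unbiased gradient estimates
    (hunbiased : ∀ k,
      μ[f k | (Filtration.natural x hx_meas) k] =ᵐ[μ] fun ω => gradient F (x k ω))
    (hstep : ∃ ε > (0:ℝ), ∀ k, ε ≤ α k * (μ' k - α k * β * ν k ^ 2 * b k / 2)) :
    ∃ (u v r s t : ℕ → ℝ) (w : ℕ → Ω → ℝ),
      (∀ k, 0 ≤ u k) ∧ (∀ k, 0 ≤ v k) ∧ (∀ k, 0 ≤ r k) ∧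
      (∀ k, 0 ≤ s k) ∧ (∀ k, 0 ≤ t k) ∧ (∀ k ω, 0 ≤ w k ω) ∧
      (∀ k, StronglyMeasurable[(Filtration.natural x hx_meas) k] (w k)) ∧
      (∀ k, Integrable (w k) μ) ∧
      Summable u ∧ (∃ ε > (0:ℝ), ∀ k, ε ≤ v k) ∧ Summable r ∧ Summable t ∧
      (∀ᵐ ω ∂μ, Summable fun k => w k ω) ∧
      (∀ k, ∀ᵐ ω ∂μ,
        (μ[fun ω' => F (x (k + 1) ω') - Fstar | (Filtration.natural x hx_meas) k]) ω ≤
          (1 + u k) * (F (x k ω) - Fstar) - v k * ‖gradient F (x k ω)‖ ^ 2 + w k ω) ∧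
      (∀ k, ∀ᵐ ω ∂μ,
        (μ[fun ω' => ‖x (k + 1) ω' - x k ω'‖ | (Filtration.natural x hx_meas) k]) ω ≤
          r k * Real.sqrt (F (x k ω) - Fstar) + s k * ‖gradient F (x k ω)‖ + t k) := by
  obtain ⟨ε, hε, hεstep⟩ := hstep
  set K := β.toNNReal
  have hKpos : 0 < K := Real.toNNReal_pos.2 hβ
  have hεstep' : ∀ k, ε ≤ α k * μ' k - K / 2 * (α k * ν k) ^ 2 * b k := fun k =>
    (hεstep k).trans_eq (by rw [Real.coe_toNNReal β hβ.le]; ring)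
  have hFmin : ∀ z, Fstar ≤ F z := fun z => hFstar.2 ⟨z, rfl⟩
  have hαν : ∀ k, 0 ≤ α k * ν k := fun k => mul_nonneg (hα k).le (hν_pos k).le
  have hU_norm : ∀ k, ∀ᵐ ω ∂μ, ‖U k ω‖ ≤ ν k := fun k => (hU_spectrum k).mono fun ω hω =>
    (U k ω).opNorm_le_of_inner_map_self_le (hU_selfadj k ω) (hν_pos k).le
      (fun z => (mul_nonneg (hμ'_pos k).le (sq_nonneg _)).trans (hω z).1) fun z => (hω z).2
  have hm := (Filtration.natural x hx_meas).le
  refine ⟨fun k => K / 2 * (α k * ν k) ^ 2 * a k,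
    fun k => min (α k * μ' k - K / 2 * (α k * ν k) ^ 2 * b k) (1 / (2 * K)),
    fun k => α k * ν k * √(a k), fun k => α k * ν k * √(b k), fun k => α k * ν k * √(c k),
    fun k _ => K / 2 * (α k * ν k) ^ 2 * c k, fun k => by have := ha k; positivity,
    fun k => le_min (hε.le.trans (hεstep' k)) (by positivity),
    fun k => by have := hαν k; positivity, fun k => by have := hαν k; positivity,
    fun k => by have := hαν k; positivity, fun k _ => by have := hc k; positivity,
    fun k => stronglyMeasurable_const, fun k => integrable_const _,
    summable_mul_sq_mul_of_summable_mul_sqrt _ hαν ha hsum_a,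
    ⟨min ε (1 / (2 * K)), by positivity, fun k => min_le_min_right _ (hεstep' k)⟩,
    hsum_a, hsum_c, ae_of_all _ fun _ => summable_mul_sq_mul_of_summable_mul_sqrt _ hαν hc hsum_c,
    fun k => ?_, fun k => ?_⟩ <;> simp only [hscheme]
  · exact ae_condExp_preconditioned_step_le (hm k) hF_diff hF_lip hKpos hFmin
      (Filtration.stronglyAdapted_natural hx_meas k) (hU_adapted k) (hU_selfadj k) (hU_norm k)
      ((hU_spectrum k).mono fun ω hω z => (hω z).1) (hα k).le (hf_int k) (hf_sq_int k)
      (hunbiased k) (hmoment k) (ha k) (hc k) (min_le_left _ _) (min_le_right _ _)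
  · exact ae_condExp_norm_preconditioned_step_le (hm k) hFmin
      ((hU_adapted k).mono (hm k)).aestronglyMeasurable (hU_norm k) (hα k).le (hν_pos k).le
      (hf_int k) (hf_sq_int k) (hmoment k) (ha k) (hb k) (hc k)

/-- **Proposition 7, case (i).** A preconditioned stochastic gradient scheme
with conditionally unbiased gradient estimates satisfying the second-moment bound, under the
stated step-size and spectrum conditions, satisfies Assumption 4. -/
theorem sgd_unbiased_satisfies_assumption4
    {H : Type*} [NormedAddCommGroup H] [InnerProductSpace ℝ H] [FiniteDimensional ℝ H]
    [MeasurableSpace H] [BorelSpace H]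
    {Ω : Type*} {m0 : MeasurableSpace Ω} (μ : Measure Ω) [IsProbabilityMeasure μ]
    (F : H → ℝ)
    (hF_coercive : Tendsto F (Bornology.cobounded H) atTop)
    (β : ℝ) (hβ : 0 < β)
    (hF_diff : Differentiable ℝ F)
    (hF_lip : LipschitzWith (Real.toNNReal β) (gradient F))
    (Fstar : ℝ) (hFstar : IsLeast (Set.range F) Fstar)
    (x : ℕ → Ω → H) (hx_meas : ∀ k, StronglyMeasurable (x k))
    (f : ℕ → Ω → H) (hf_int : ∀ k, Integrable (f k) μ)
    (hf_sq_int : ∀ k, Integrable (fun ω => ‖f k ω‖ ^ 2) μ)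
    (U : ℕ → Ω → H →L[ℝ] H)
    (α a b c μ' ν : ℕ → ℝ)
    (hα : ∀ k, 0 < α k) (ha : ∀ k, 0 ≤ a k) (hb : ∀ k, 0 ≤ b k) (hc : ∀ k, 0 ≤ c k)
    (hμ'_pos : ∀ k, 0 < μ' k) (hν_pos : ∀ k, 0 < ν k)
    -- the preconditioned stochastic gradient scheme
    (hscheme : ∀ k ω, x (k + 1) ω = x k ω - α k • (U k ω) (f k ω))
    -- `U k` is `𝓕 k`-measurable and self-adjoint, with a.s. uniformly bounded spectrum
    (hU_adapted : ∀ k, StronglyMeasurable[(Filtration.natural x hx_meas) k] (U k))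
    (hU_selfadj : ∀ k ω, ∀ y z : H, ⟪(U k ω) y, z⟫ = ⟪y, (U k ω) z⟫)
    (hU_spectrum : ∀ k, ∀ᵐ ω ∂μ, ∀ z : H,
      μ' k * ‖z‖ ^ 2 ≤ ⟪z, (U k ω) z⟫ ∧ ⟪z, (U k ω) z⟫ ≤ ν k * ‖z‖ ^ 2)
    -- conditional second moment bound on the gradient estimates
    (hmoment : ∀ k, ∀ᵐ ω ∂μ,
      (μ[fun ω' => ‖f k ω'‖ ^ 2 | (Filtration.natural x hx_meas) k]) ω ≤
        a k * (F (x k ω) - Fstar) + b k * ‖gradient F (x k ω)‖ ^ 2 + c k)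
    -- conditions (5.9)
    (hμ'_inf : ∃ ε > (0:ℝ), ∀ k, ε ≤ μ' k)
    (hsum_a : Summable fun k => α k * ν k * Real.sqrt (a k))
    (hsum_c : Summable fun k => α k * ν k * Real.sqrt (c k))
    -- case (i): conditionally unbiased gradient estimates
    (hunbiased : ∀ k,
      μ[f k | (Filtration.natural x hx_meas) k] =ᵐ[μ] fun ω => gradient F (x k ω))
    (hstep : ∃ ε > (0:ℝ), ∀ k, ε ≤ α k * (μ' k - α k * β * ν k ^ 2 * b k / 2)) :
    ∃ (u v r s t : ℕ → ℝ) (w : ℕ → Ω → ℝ),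
      (∀ k, 0 ≤ u k) ∧ (∀ k, 0 ≤ v k) ∧ (∀ k, 0 ≤ r k) ∧
      (∀ k, 0 ≤ s k) ∧ (∀ k, 0 ≤ t k) ∧ (∀ k ω, 0 ≤ w k ω) ∧
      (∀ k, StronglyMeasurable[(Filtration.natural x hx_meas) k] (w k)) ∧
      (∀ k, Integrable (w k) μ) ∧
      Summable u ∧ (∃ ε > (0:ℝ), ∀ k, ε ≤ v k) ∧ Summable r ∧ Summable t ∧
      (∀ᵐ ω ∂μ, Summable fun k => w k ω) ∧
      (∀ k, ∀ᵐ ω ∂μ,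
        (μ[fun ω' => F (x (k + 1) ω') - Fstar | (Filtration.natural x hx_meas) k]) ω ≤
          (1 + u k) * (F (x k ω) - Fstar) - v k * ‖gradient F (x k ω)‖ ^ 2 + w k ω) ∧
      (∀ k, ∀ᵐ ω ∂μ,
        (μ[fun ω' => ‖x (k + 1) ω' - x k ω'‖ | (Filtration.natural x hx_meas) k]) ω ≤
          r k * Real.sqrt (F (x k ω) - Fstar) + s k * ‖gradient F (x k ω)‖ + t k) :=
  sgd_unbiased_satisfies_assumption4_general (m0 := m0) μ F β hβ hF_diff hF_lip Fstar hFstar x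
    hx_meas f hf_int hf_sq_int U α a b c μ' ν hα ha hb hc hμ'_pos hν_pos hscheme hU_adapted
    hU_selfadj hU_spectrum hmoment hsum_a hsum_c hunbiased hstep
end

section
/- Let ℋ be a finite-dimensional real Hilbert space, let H : ℋ → ℝ be convex and differentiable with β_H-Lipschitz gradient (β_H > 0), and let γ ∈ (0, 1/β_H). For x, g ∈ ℋ, define d = γ^{−1}(x − prox_{γH}(x − γ g)). Then d = g + ∇H(x − γ d). Moreover, if G : ℋ → ℝ is differentiable and F = G + H, then ‖d‖ ≤ (1 − β_H γ)^{−1} ( ‖∇F(x)‖ + ‖g − ∇G(x)‖ ). -/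
open Filter Topology

/-- The proximity operator of `h : E → ℝ` with parameter `γ > 0` at `y`: the (unique, for
proper lsc convex `h`) minimizer of `u ↦ h u + (1/(2γ)) ‖y - u‖²`. -/
noncomputable def proxOp {E : Type*} [NormedAddCommGroup E] [InnerProductSpace ℝ E]
    (γ : ℝ) (h : E → ℝ) (y : E) : E :=
  letI : Nonempty E := ⟨0⟩
  Classical.epsilon fun p =>
    ∀ u, h p + 1 / (2 * γ) * ‖y - p‖ ^ 2 ≤ h u + 1 / (2 * γ) * ‖y - u‖ ^ 2

/-!
Fermat's rule for the prox objective `u ↦ H u + ‖y - u‖² / (2γ)` at its minimiser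
`p = x - γ d` (which exists since convexity gives `H` an affine minorant, making the objective
coercive) reads `y - p = γ ∇H p`, and with `y = x - γ g` this is `d = g + ∇H (x - γ d)`.
Then `d = ∇F x + (g - ∇G x) + (∇H (x - γ d) - ∇H x)`, and the last term has norm at most
`β_H γ ‖d‖`, which is absorbed into the left-hand side because `β_H γ < 1`.
-/

open InnerProductSpace Set
open scoped NNReal

section

variable {E : Type*} [NormedAddCommGroup E] [InnerProductSpace ℝ E]

theorem exists_forall_add_mul_norm_sub_sq_le [ProperSpace E] {h : E → ℝ} (hh : Continuous h)
    {y g : E} (hg : ∀ u, h y + ⟪g, u - y⟫_ℝ ≤ h u) {c : ℝ} (hc : 0 < c) :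
    ∃ p, ∀ u, h p + c * ‖y - p‖ ^ 2 ≤ h u + c * ‖y - u‖ ^ 2 := by
  refine hh.add (continuous_const.mul ((continuous_const.sub continuous_id).norm.pow 2))
    |>.exists_forall_le' y ?_
  filter_upwards [(isCompact_closedBall y (‖g‖ / c)).compl_mem_cocompact] with u hu
  have hfar : ‖g‖ ≤ c * ‖y - u‖ := by
    rw [mem_compl_iff, Metric.mem_closedBall, dist_eq_norm, not_le, div_lt_iff₀ hc] at hu
    rw [norm_sub_rev]; linarith
  have hcs : -(‖g‖ * ‖y - u‖) ≤ ⟪g, u - y⟫_ℝ := by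
    rw [norm_sub_rev y u]
    exact neg_le_of_abs_le (abs_real_inner_le_norm g _)
  have hmin := hg u
  show h y + c * ‖y - y‖ ^ 2 ≤ h u + c * ‖y - u‖ ^ 2
  simp only [sub_self, norm_zero]
  nlinarith [norm_nonneg (y - u)]

variable [CompleteSpace E]

theorem HasGradientAt.add {f g : E → ℝ} {f' g' x : E} (hf : HasGradientAt f f' x)
    (hg : HasGradientAt g g' x) : HasGradientAt (fun u => f u + g u) (f' + g') x := by
  rw [hasGradientAt_iff_hasFDerivAt, map_add]
  exact hf.hasFDerivAt.add hg.hasFDerivAt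

theorem HasGradientAt.const_mul {f : E → ℝ} {f' x : E} (c : ℝ) (hf : HasGradientAt f f' x) :
    HasGradientAt (fun u => c * f u) (c • f') x := by
  rw [hasGradientAt_iff_hasFDerivAt, map_smul]
  exact hf.hasFDerivAt.const_mul c

theorem hasGradientAt_norm_sub_sq (y p : E) :
    HasGradientAt (fun u => ‖y - u‖ ^ 2) ((2 : ℝ) • (p - y)) p := by
  rw [hasGradientAt_iff_hasFDerivAt]
  refine ((hasFDerivAt_id p).const_sub y).norm_sq.congr_fderiv ?_
  ext v
  simp

theorem ConvexOn.add_inner_le_of_hasGradientAt {s : Set E} {f : E → ℝ} {f' u v : E}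
    (hf : ConvexOn ℝ s f) (hv : v ∈ s) (hu : u ∈ s) (hf' : HasGradientAt f f' v) :
    f v + ⟪f', u - v⟫_ℝ ≤ f u := by
  have hline : ConvexOn ℝ (Icc (0 : ℝ) 1) (f ∘ AffineMap.lineMap (k := ℝ) v u) :=
    (hf.comp_affineMap _).subset (fun t ht => hf.1.lineMap_mem hv hu ht) (convex_Icc 0 1)
  have hderiv : HasDerivAt (f ∘ AffineMap.lineMap (k := ℝ) v u) ⟪f', u - v⟫_ℝ 0 := by
    simpa using hf'.hasFDerivAt.comp_hasDerivAt_of_eq (x := (0 : ℝ))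
      AffineMap.hasDerivAt_lineMap (AffineMap.lineMap_apply_zero v u).symm
  have := hline.le_slope_of_hasDerivAt (by simp) (by simp) zero_lt_one hderiv
  simp only [slope_def_field, Function.comp_apply, AffineMap.lineMap_apply_one,
    AffineMap.lineMap_apply_zero, sub_zero, div_one] at this
  linarith

theorem IsLocalMin.hasGradientAt_eq_zero {f : E → ℝ} {f' a : E} (h : IsLocalMin f a)
    (hf : HasGradientAt f f' a) : f' = 0 :=
  (toDual ℝ E).map_eq_zero_iff.mp (h.hasFDerivAt_eq_zero hf.hasFDerivAt)

theorem sub_eq_smul_gradient_of_forall_add_norm_sub_sq_le {h : E → ℝ} {γ : ℝ} (hγ : γ ≠ 0)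
    {y p : E} (hh : DifferentiableAt ℝ h p)
    (hp : ∀ u, h p + 1 / (2 * γ) * ‖y - p‖ ^ 2 ≤ h u + 1 / (2 * γ) * ‖y - u‖ ^ 2) :
    y - p = γ • gradient h p := by
  have hcrit := IsLocalMin.hasGradientAt_eq_zero (Eventually.of_forall hp)
    (hh.hasGradientAt.add ((hasGradientAt_norm_sub_sq y p).const_mul (1 / (2 * γ))))
  rw [smul_smul, show 1 / (2 * γ) * 2 = γ⁻¹ by field_simp, add_eq_zero_iff_eq_neg, ← smul_neg,
    neg_sub] at hcrit
  rw [hcrit, smul_inv_smul₀ hγ]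

theorem proxOp_spec [FiniteDimensional ℝ E] {h : E → ℝ} (hconv : ConvexOn ℝ univ h)
    (hdiff : Differentiable ℝ h) {γ : ℝ} (hγ : 0 < γ) (y : E) (u : E) :
    h (proxOp γ h y) + 1 / (2 * γ) * ‖y - proxOp γ h y‖ ^ 2 ≤ h u + 1 / (2 * γ) * ‖y - u‖ ^ 2 :=
  Classical.epsilon_spec (exists_forall_add_mul_norm_sub_sq_le hdiff.continuous
      (fun u => hconv.add_inner_le_of_hasGradientAt trivial trivial (hdiff y).hasGradientAt)
      (by positivity)) u

theorem sub_proxOp_eq_smul_gradient [FiniteDimensional ℝ E] {h : E → ℝ}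
    (hconv : ConvexOn ℝ univ h) (hdiff : Differentiable ℝ h) {γ : ℝ} (hγ : 0 < γ) (y : E) :
    y - proxOp γ h y = γ • gradient h (proxOp γ h y) :=
  sub_eq_smul_gradient_of_forall_add_norm_sub_sq_le hγ.ne' (hdiff _) (proxOp_spec hconv hdiff hγ y)

theorem norm_le_of_eq_add_gradient {G H : E → ℝ} {x g d : E} (hG : DifferentiableAt ℝ G x)
    (hH : DifferentiableAt ℝ H x) {K : ℝ≥0} (hlip : LipschitzWith K (gradient H)) {γ : ℝ}
    (hγ : 0 ≤ γ) (hKγ : K * γ < 1) (hd : d = g + gradient H (x - γ • d)) :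
    ‖d‖ ≤ (1 - K * γ)⁻¹ * (‖gradient (fun z => G z + H z) x‖ + ‖g - gradient G x‖) := by
  have hsum : gradient (fun z => G z + H z) x = gradient G x + gradient H x :=
    (hG.hasGradientAt.add hH.hasGradientAt).gradient
  have hstep : ‖gradient H (x - γ • d) - gradient H x‖ ≤ K * (γ * ‖d‖) := by
    simpa [dist_eq_norm, norm_smul, abs_of_nonneg hγ] using hlip.dist_le_mul (x - γ • d) x
  have hnorm : ‖d‖ ≤ ‖gradient G x + gradient H x‖ + ‖g - gradient G x‖ + K * (γ * ‖d‖) :=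
    calc ‖d‖ = ‖(gradient G x + gradient H x) + (g - gradient G x)
          + (gradient H (x - γ • d) - gradient H x)‖ := by
          congr 1
          conv_lhs => rw [hd]
          abel
      _ ≤ _ := norm_add₃_le
      _ ≤ _ := by gcongr
  rw [hsum, inv_mul_eq_div, le_div_iff₀ (sub_pos.2 hKγ)]
  linarith

end

/-- For convex `H` with `β_H`-Lipschitz gradient and `γ ∈ (0, 1/β_H)`,
the quantity `d = γ⁻¹ (x - prox_{γH}(x - γ g))` satisfies `d = g + ∇H(x - γ d)`; moreover,
if `G` is differentiable and `F = G + H`, then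
`‖d‖ ≤ (1 - β_H γ)⁻¹ (‖∇F x‖ + ‖g - ∇G x‖)`. -/
theorem prox_gradient_step_identity_and_bound
    {E : Type*} [NormedAddCommGroup E] [InnerProductSpace ℝ E] [FiniteDimensional ℝ E]
    (Hf : E → ℝ) (βH : ℝ) (hβH : 0 < βH)
    (hH_convex : ConvexOn ℝ Set.univ Hf)
    (hH_diff : Differentiable ℝ Hf)
    (hH_lip : LipschitzWith (Real.toNNReal βH) (gradient Hf))
    (γ : ℝ) (hγ : γ ∈ Set.Ioo (0:ℝ) (1 / βH))
    (x g d : E) (hd : d = γ⁻¹ • (x - proxOp γ Hf (x - γ • g))) :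
    d = g + gradient Hf (x - γ • d) ∧
      ∀ G : E → ℝ, Differentiable ℝ G →
        ‖d‖ ≤ (1 - βH * γ)⁻¹ *
          (‖gradient (fun z => G z + Hf z) x‖ + ‖g - gradient G x‖) := by
  obtain ⟨hγ0, hγβ⟩ := hγ
  have hβ : (Real.toNNReal βH : ℝ) = βH := Real.coe_toNNReal _ hβH.le
  have hprox : proxOp γ Hf (x - γ • g) = x - γ • d := by
    rw [hd, smul_inv_smul₀ hγ0.ne']
    abel
  have hid : d = g + gradient Hf (x - γ • d) := by
    have hfermat := sub_proxOp_eq_smul_gradient hH_convex hH_diff hγ0 (x - γ • g)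
    rw [hprox, show x - γ • g - (x - γ • d) = γ • (d - g) by module] at hfermat
    exact eq_add_of_sub_eq' (smul_right_injective E hγ0.ne' hfermat)
  refine ⟨hid, fun G hG => ?_⟩
  have hβγ : (Real.toNNReal βH : ℝ) * γ < 1 := by
    rw [hβ, mul_comm]
    exact (lt_div_iff₀ hβH).mp hγβ
  simpa [hβ] using norm_le_of_eq_add_gradient (hG x) (hH_diff x) hH_lip hγ0.le hβγ hid
end
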